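/- arXiv:1508.00290 — 6 statements merged into one kernel-verified Lean document; each statement's English description precedes it below -/
import Mathlib

section
/- Let m ≥ 1, h > 0, τ > 0, b̄ > 0 and let b_n : ℝ → ℝ be a continuously differentiable function with b_n'(v) ≥ b̄ for all v ∈ ℝ. Then for any data Φ ∈ ℝ^{m+1}, (f_{ik})_{i=0,…,m−1, k=1,…,n} ⊂ ℝ, (p_k)_{k=1,…,n} ⊂ ℝ and (g_k)_{k=1,…,n} ⊂ ℝ, there exists a unique discrete state vector [v]_n = (v(0),…,v(n)) with v(k) ∈ ℝ^{m+1}; that is, a unique family satisfying v_i(0) = Φ_i for i = 0,…,m and, for every k = 1,…,n and every η = (η_0,…,η_m) ∈ ℝ^{m+1}, the identity Σ_{i=0}^{m−1} h[ ((b_n(v_i(k)) − b_n(v_i(k−1)))/τ)·η_i + ((v_{i+1}(k) − v_i(k))/h)·((η_{i+1} − η_i)/h) − f_{ik} η_i ] − p_k η_m + g_k η_0 = 0. -/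
/-!
Each time step is a discrete two-point boundary value problem: with `x (-1) := x 0 - h g`, the
identity for all `η` amounts to `x (j + 1) - 2 x j + x (j - 1) = h² ((b (x j) - b (u j)) / τ - f j)`
for `j < m` together with `x m - x (m - 1) = h p`. Existence is by shooting: start the recursion
from `x 0 = t`; since `b` grows at rate at least `b̄`, the final slope `x m - x (m - 1)` is
continuous in `t` and grows at rate at least `h² b̄ / τ`, so it attains `h p`. Uniqueness: testing
the difference of two solutions with `η = x - y` gives a sum of nonnegative terms, which all vanish
since `b` is strictly increasing.
-/

/-- The discrete state vector property for the finite-difference discretization of the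
multiphase Stefan problem: `v k i` is the value `v_i(k)`; `Φd` is the initial data,
`fd i k` the sources, `pd k` and `gd k` the boundary flux data. -/
def IsDiscreteStateVector (bn : ℝ → ℝ) (τ h : ℝ) (n m : ℕ)
    (Φd : ℕ → ℝ) (fd : ℕ → ℕ → ℝ) (pd gd : ℕ → ℝ) (v : ℕ → ℕ → ℝ) : Prop :=
  (∀ i ≤ m, v 0 i = Φd i) ∧
  ∀ k, 1 ≤ k → k ≤ n → ∀ η : ℕ → ℝ,
    (∑ i ∈ Finset.range m,
      h * ((bn (v k i) - bn (v (k - 1) i)) / τ * η i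
        + (v k (i + 1) - v k i) / h * ((η (i + 1) - η i) / h)
        - fd i k * η i))
      - pd k * η m + gd k * η 0 = 0

open Finset Filter

theorem surjective_of_continuous_of_mul_sub_le_sub {ψ : ℝ → ℝ} (hψ : Continuous ψ) {c : ℝ}
    (hc : 0 < c) (hψc : ∀ ⦃s t⦄, s ≤ t → c * (t - s) ≤ ψ t - ψ s) :
    Function.Surjective ψ := by
  refine hψ.surjective ?_ ?_
  · refine tendsto_atTop_mono' atTop ?_
      (tendsto_atTop_add_const_left _ (ψ 0) (tendsto_id.const_mul_atTop hc))
    filter_upwards [eventually_ge_atTop 0] with t ht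
    show ψ 0 + c * t ≤ ψ t
    linarith [hψc ht]
  · refine tendsto_atBot_mono' atBot ?_
      (tendsto_atBot_add_const_left _ (ψ 0) (tendsto_id.const_mul_atBot hc))
    filter_upwards [eventually_le_atBot 0] with t ht
    show ψ t ≤ ψ 0 + c * t
    linarith [hψc ht]

theorem sub_mul_sub_pos_of_strictMono {α : Type*} [Ring α] [LinearOrder α] [IsStrictOrderedRing α]
    {f : α → α} (hf : StrictMono f) {x y : α} (hxy : x ≠ y) : 0 < (f x - f y) * (x - y) := by
  rcases hxy.lt_or_gt with hlt | hlt
  · exact mul_pos_of_neg_of_neg (sub_neg.2 (hf hlt)) (sub_neg.2 hlt)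
  · exact mul_pos (sub_pos.2 (hf hlt)) (sub_pos.2 hlt)

theorem sub_mul_sub_nonneg_of_monotone {α : Type*} [Ring α] [LinearOrder α] [IsStrictOrderedRing α]
    {f : α → α} (hf : Monotone f) (x y : α) : 0 ≤ (f x - f y) * (x - y) := by
  rcases le_total x y with hle | hle
  · exact mul_nonneg_of_nonpos_of_nonpos (sub_nonpos.2 (hf hle)) (sub_nonpos.2 hle)
  · exact mul_nonneg (sub_nonneg.2 (hf hle)) (sub_nonneg.2 hle)

/-- Shooting for `x (j + 1) - 2 x j + x (j - 1) = F j (x j)`: the pair `(x j, x j - x (j - 1))`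
started from `x 0 = t` and the initial slope `d₀`. -/
noncomputable def shoot (F : ℕ → ℝ → ℝ) (d₀ t : ℝ) : ℕ → ℝ × ℝ
  | 0 => (t, d₀)
  | j + 1 =>
    let q := shoot F d₀ t j
    (q.1 + q.2 + F j q.1, q.2 + F j q.1)

section shoot

variable (F : ℕ → ℝ → ℝ) (d₀ : ℝ)

@[simp] theorem shoot_zero (t : ℝ) : shoot F d₀ t 0 = (t, d₀) := rfl

theorem shoot_succ_snd (t : ℝ) (j : ℕ) :
    (shoot F d₀ t (j + 1)).2 = (shoot F d₀ t j).2 + F j (shoot F d₀ t j).1 := rfl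

theorem shoot_succ_fst (t : ℝ) (j : ℕ) :
    (shoot F d₀ t (j + 1)).1 = (shoot F d₀ t j).1 + (shoot F d₀ t (j + 1)).2 := by
  simp only [shoot_succ_snd]; exact add_assoc _ _ _

theorem continuous_shoot (hF : ∀ j, Continuous (F j)) (j : ℕ) :
    Continuous fun t => shoot F d₀ t j := by
  induction j with
  | zero => exact continuous_id.prodMk continuous_const
  | succ j ih =>
    have hF' : Continuous fun t => F j (shoot F d₀ t j).1 := (hF j).comp ih.fst
    exact ((ih.fst.add ih.snd).add hF').prodMk (ih.snd.add hF')

theorem shoot_sub_shoot_ge {c : ℝ} (hc : 0 ≤ c)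
    (hF : ∀ j ⦃s t⦄, s ≤ t → c * (t - s) ≤ F j t - F j s) {s t : ℝ} (hst : s ≤ t) (j : ℕ) :
    t - s ≤ (shoot F d₀ t j).1 - (shoot F d₀ s j).1 ∧
      j * c * (t - s) ≤ (shoot F d₀ t j).2 - (shoot F d₀ s j).2 := by
  induction j with
  | zero => simp
  | succ j ih =>
    obtain ⟨hpos, hslope⟩ := ih
    have hFj := hF j (by linarith : (shoot F d₀ s j).1 ≤ (shoot F d₀ t j).1)
    have hslope' :
        (j + 1 : ℕ) * c * (t - s) ≤ (shoot F d₀ t (j + 1)).2 - (shoot F d₀ s (j + 1)).2 := by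
      rw [shoot_succ_snd, shoot_succ_snd]
      push_cast
      nlinarith
    refine ⟨?_, hslope'⟩
    rw [shoot_succ_fst, shoot_succ_fst F d₀ s]
    have : 0 ≤ (j + 1 : ℕ) * c * (t - s) := by positivity
    linarith

end shoot

/-- The scheme's identity for a single time step: `x` is the new layer and `u` the previous one. -/
def IsLayerSolution (b : ℝ → ℝ) (τ h : ℝ) (m : ℕ) (u f : ℕ → ℝ) (p g : ℝ) (x : ℕ → ℝ) : Prop :=
  ∀ η : ℕ → ℝ,
    (∑ i ∈ range m,
      h * ((b (x i) - b (u i)) / τ * η i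
        + (x (i + 1) - x i) / h * ((η (i + 1) - η i) / h)
        - f i * η i))
      - p * η m + g * η 0 = 0

theorem isDiscreteStateVector_iff {bn : ℝ → ℝ} {τ h : ℝ} {n m : ℕ} {Φd : ℕ → ℝ}
    {fd : ℕ → ℕ → ℝ} {pd gd : ℕ → ℝ} {v : ℕ → ℕ → ℝ} :
    IsDiscreteStateVector bn τ h n m Φd fd pd gd v ↔
      (∀ i ≤ m, v 0 i = Φd i) ∧ ∀ k < n,
        IsLayerSolution bn τ h m (v k) (fun i => fd i (k + 1)) (pd (k + 1)) (gd (k + 1))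
          (v (k + 1)) := by
  refine and_congr_right fun _ => ⟨fun hv k hk => hv (k + 1) k.succ_pos hk, fun hv k hk hkn => ?_⟩
  obtain ⟨j, rfl⟩ := Nat.exists_eq_add_of_le' hk
  exact hv j hkn

noncomputable def layerForcing (b : ℝ → ℝ) (τ h : ℝ) (u f : ℕ → ℝ) (j : ℕ) (s : ℝ) : ℝ :=
  h ^ 2 * ((b s - b (u j)) / τ - f j)

section Layer

variable {b : ℝ → ℝ} {τ h : ℝ} {m : ℕ} {u f : ℕ → ℝ} {p g : ℝ}

/-- The slopes telescope the sum; the initial slope `h * g` accounts for the flux at `i = 0`. -/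
theorem isLayerSolution_shoot (hh : h ≠ 0) {t : ℝ}
    (ht : (shoot (layerForcing b τ h u f) (h * g) t m).2 = h * p) :
    IsLayerSolution b τ h m u f p g fun j => (shoot (layerForcing b τ h u f) (h * g) t j).1 := by
  intro η
  set F := layerForcing b τ h u f
  have hterm : ∀ i, h * ((b (shoot F (h * g) t i).1 - b (u i)) / τ * η i
      + ((shoot F (h * g) t (i + 1)).1 - (shoot F (h * g) t i).1) / h * ((η (i + 1) - η i) / h)
      - f i * η i) =
        (shoot F (h * g) t (i + 1)).2 * η (i + 1) / h - (shoot F (h * g) t i).2 * η i / h := by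
    intro i
    rw [shoot_succ_fst, add_sub_cancel_left, shoot_succ_snd]
    simp only [F, layerForcing]
    field_simp
    ring
  rw [sum_congr rfl fun i _ => hterm i, sum_range_sub (fun i => (shoot F (h * g) t i).2 * η i / h),
    ht, shoot_zero]
  field_simp
  ring

theorem exists_isLayerSolution (hb : Continuous b) {c : ℝ} (hc : 0 < c)
    (hbc : ∀ ⦃s t⦄, s ≤ t → c * (t - s) ≤ b t - b s) (hτ : 0 < τ) (hh : 0 < h) (hm : m ≠ 0)
    (u f : ℕ → ℝ) (p g : ℝ) : ∃ x, IsLayerSolution b τ h m u f p g x := by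
  set F := layerForcing b τ h u f
  have hFc : ∀ j, Continuous (F j) := fun j => by unfold F layerForcing; fun_prop
  have hFmono : ∀ j ⦃s t⦄, s ≤ t → h ^ 2 * c / τ * (t - s) ≤ F j t - F j s := by
    intro j s t hst
    calc h ^ 2 * c / τ * (t - s) = h ^ 2 / τ * (c * (t - s)) := by ring
      _ ≤ h ^ 2 / τ * (b t - b s) := by gcongr; exact hbc hst
      _ = F j t - F j s := by simp only [F, layerForcing]; ring
  have hc' : 0 < h ^ 2 * c / τ := by positivity
  have hslope : ∀ ⦃s t⦄, s ≤ t →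
      h ^ 2 * c / τ * (t - s) ≤ (shoot F (h * g) t m).2 - (shoot F (h * g) s m).2 := by
    intro s t hst
    have hm1 : (1 : ℝ) ≤ m := Nat.one_le_cast.2 (Nat.one_le_iff_ne_zero.2 hm)
    have := (shoot_sub_shoot_ge F (h * g) hc'.le hFmono hst m).2
    nlinarith [mul_nonneg hc'.le (sub_nonneg.2 hst)]
  obtain ⟨t, ht⟩ := surjective_of_continuous_of_mul_sub_le_sub
    (continuous_shoot F (h * g) hFc m).snd hc' hslope (h * p)
  exact ⟨_, isLayerSolution_shoot hh.ne' ht⟩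

variable {u' : ℕ → ℝ} {x y : ℕ → ℝ}

/-- Testing the difference of two time-step identities with `η = x - y`. -/
theorem IsLayerSolution.energy_eq_zero (hx : IsLayerSolution b τ h m u f p g x)
    (hy : IsLayerSolution b τ h m u' f p g y) (hu : ∀ i < m, u i = u' i) (hh : h ≠ 0) :
    ∑ i ∈ range m, (h / τ * ((b (x i) - b (y i)) * (x i - y i))
      + (x (i + 1) - y (i + 1) - (x i - y i)) ^ 2 / h) = 0 := by
  set η : ℕ → ℝ := fun i => x i - y i with hη
  have hsplit : ∑ i ∈ range m, (h / τ * ((b (x i) - b (y i)) * (x i - y i))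
      + (x (i + 1) - y (i + 1) - (x i - y i)) ^ 2 / h) =
      (∑ i ∈ range m, h * ((b (x i) - b (u i)) / τ * η i
        + (x (i + 1) - x i) / h * ((η (i + 1) - η i) / h) - f i * η i)) -
      ∑ i ∈ range m, h * ((b (y i) - b (u' i)) / τ * η i
        + (y (i + 1) - y i) / h * ((η (i + 1) - η i) / h) - f i * η i) := by
    rw [← sum_sub_distrib]
    refine sum_congr rfl fun i hi => ?_
    rw [hu i (mem_range.1 hi), hη]
    field_simp
    ring
  linarith [hx η, hy η]

theorem IsLayerSolution.eq_of_strictMono (hb : StrictMono b) (hτ : 0 < τ) (hh : 0 < h)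
    (hm : m ≠ 0) (hx : IsLayerSolution b τ h m u f p g x) (hy : IsLayerSolution b τ h m u' f p g y)
    (hu : ∀ i < m, u i = u' i) : ∀ i ≤ m, x i = y i := by
  have hnonneg : ∀ i, 0 ≤ h / τ * ((b (x i) - b (y i)) * (x i - y i)) ∧
      0 ≤ (x (i + 1) - y (i + 1) - (x i - y i)) ^ 2 / h := fun i =>
    ⟨mul_nonneg (by positivity) (sub_mul_sub_nonneg_of_monotone hb.monotone _ _), by positivity⟩
  have hstep : ∀ i < m, x i = y i ∧ x (i + 1) - y (i + 1) = x i - y i := by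
    intro i hi
    have hzero := (sum_eq_zero_iff_of_nonneg fun i _ => add_nonneg (hnonneg i).1 (hnonneg i).2).1
      (hx.energy_eq_zero hy hu hh.ne') i (mem_range.2 hi)
    obtain ⟨hb0, hη0⟩ := (add_eq_zero_iff_of_nonneg (hnonneg i).1 (hnonneg i).2).1 hzero
    have hsq : (x (i + 1) - y (i + 1) - (x i - y i)) ^ 2 = 0 :=
      (div_eq_zero_iff.1 hη0).resolve_right hh.ne'
    refine ⟨?_, sub_eq_zero.1 (pow_eq_zero_iff two_ne_zero |>.1 hsq)⟩
    by_contra hne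
    exact (mul_pos (by positivity) (sub_mul_sub_pos_of_strictMono hb hne)).ne' hb0
  intro i hi
  rcases hi.lt_or_eq with hi | rfl
  · exact (hstep i hi).1
  · obtain ⟨j, rfl⟩ := Nat.exists_eq_succ_of_ne_zero hm
    obtain ⟨hj, hjη⟩ := hstep j j.lt_succ_self
    linarith

end Layer

/-- Existence and uniqueness of the discrete state vector. -/
theorem exists_unique_discrete_state_vector
    (m n : ℕ) (hm : 1 ≤ m) (h τ bbar : ℝ) (hh : 0 < h) (hτ : 0 < τ) (hbbar : 0 < bbar)
    (bn : ℝ → ℝ) (hbn : ContDiff ℝ 1 bn) (hbn' : ∀ s : ℝ, bbar ≤ deriv bn s)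
    (Φd : ℕ → ℝ) (fd : ℕ → ℕ → ℝ) (pd gd : ℕ → ℝ) :
    ∃ v : ℕ → ℕ → ℝ, IsDiscreteStateVector bn τ h n m Φd fd pd gd v ∧
      ∀ w : ℕ → ℕ → ℝ, IsDiscreteStateVector bn τ h n m Φd fd pd gd w →
        ∀ k ≤ n, ∀ i ≤ m, w k i = v k i := by
  have hm₀ : m ≠ 0 := Nat.one_le_iff_ne_zero.1 hm
  have hstrong : ∀ ⦃s t⦄, s ≤ t → bbar * (t - s) ≤ bn t - bn s :=
    mul_sub_le_image_sub_of_le_deriv (hbn.differentiable one_ne_zero) hbn'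
  have hmono : StrictMono bn := fun s t hst => by
    linarith [hstrong hst.le, mul_pos hbbar (sub_pos.2 hst)]
  choose next hnext using fun (u : ℕ → ℝ) (k : ℕ) =>
    exists_isLayerSolution hbn.continuous hbbar hstrong hτ hh hm₀ u (fun i => fd i k) (pd k) (gd k)
  let v : ℕ → ℕ → ℝ := fun k => Nat.rec Φd (fun j vj => next vj (j + 1)) k
  have hv : IsDiscreteStateVector bn τ h n m Φd fd pd gd v :=
    isDiscreteStateVector_iff.2 ⟨fun _ _ => rfl, fun k _ => hnext _ _⟩
  refine ⟨v, hv, fun w hw => ?_⟩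
  rw [isDiscreteStateVector_iff] at hv hw
  intro k
  induction k with
  | zero => intro _ i hi; rw [hw.1 i hi, hv.1 i hi]
  | succ k ih =>
    intro hk
    exact (hw.2 k hk).eq_of_strictMono hmono hτ hh hm₀ (hv.2 k hk)
      fun i hi => ih (Nat.le_of_succ_le hk) i hi.le
end

section
/- Let m ≥ 2, h > 0, τ > 0, b̄ > 0 and let ζ_0,…,ζ_{m−1} ∈ ℝ satisfy ζ_i ≥ b̄ for all i. Suppose w = (w_0,…,w_m) ∈ ℝ^{m+1} and u = (u_0,…,u_m) ∈ ℝ^{m+1} satisfy: (1 + (h²/τ)ζ_0)·w_0 = u_1; (2 + (h²/τ)ζ_i)·w_i = u_{i+1} + u_{i−1} for i = 1,…,m−1; and w_m = w_{m−1}. Then max_{0≤i≤m} |w_i| ≤ δ · max_{0≤i≤m} |u_i|, where δ = (1 + h²b̄/(4τ))^{−1} ∈ (0,1). -/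
/-- Contraction estimate for the method of successive approximations for the nonlinear
tridiagonal system arising at each time step of the implicit finite-difference scheme. -/
theorem successive_approximation_contraction
    (m : ℕ) (hm : 2 ≤ m) (h τ bbar : ℝ) (hh : 0 < h) (hτ : 0 < τ) (hbbar : 0 < bbar)
    (ζ : ℕ → ℝ) (hζ : ∀ i < m, bbar ≤ ζ i)
    (w u : ℕ → ℝ)
    (h0 : (1 + h ^ 2 / τ * ζ 0) * w 0 = u 1)
    (hi : ∀ i, 1 ≤ i → i ≤ m - 1 →
      (2 + h ^ 2 / τ * ζ i) * w i = u (i + 1) + u (i - 1))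
    (hlast : w m = w (m - 1)) :
    (1 + h ^ 2 * bbar / (4 * τ))⁻¹ ∈ Set.Ioo (0 : ℝ) 1 ∧
    (Finset.range (m + 1)).sup' (Finset.nonempty_range_iff.mpr (Nat.succ_ne_zero m))
        (fun i => |w i|)
      ≤ (1 + h ^ 2 * bbar / (4 * τ))⁻¹ *
        (Finset.range (m + 1)).sup' (Finset.nonempty_range_iff.mpr (Nat.succ_ne_zero m))
          (fun i => |u i|) := by
  have hc : (0:ℝ) < 1 + h ^ 2 * bbar / (4 * τ) := by positivity
  have hc1 : (1:ℝ) < 1 + h ^ 2 * bbar / (4 * τ) := by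
    have : 0 < h ^ 2 * bbar / (4 * τ) := by positivity
    linarith
  set U := (Finset.range (m + 1)).sup' (Finset.nonempty_range_iff.mpr (Nat.succ_ne_zero m))
      (fun i => |u i|) with hUdef
  have hU : ∀ j ≤ m, |u j| ≤ U := fun j hj =>
    Finset.le_sup' (fun i => |u i|) (Finset.mem_range.mpr (Nat.lt_succ_of_le hj))
  have hU0 : 0 ≤ U := le_trans (abs_nonneg _) (hU 0 (Nat.zero_le m))
  have key : ∀ i ≤ m - 1, (1 + h ^ 2 * bbar / (4 * τ)) * |w i| ≤ U := by
    intro i hi2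
    rcases Nat.eq_zero_or_pos i with rfl | hi1
    · have hz := hζ 0 (by omega)
      have hpos : (0:ℝ) < 1 + h ^ 2 / τ * ζ 0 := by
        have : 0 < h ^ 2 / τ * ζ 0 := by
          apply mul_pos (by positivity); linarith
        linarith
      have e : (1 + h ^ 2 / τ * ζ 0) * |w 0| = |u 1| := by
        rw [← abs_of_pos hpos, ← abs_mul, h0]
      have h1U := hU 1 (by omega)
      have haw := abs_nonneg (w 0)
      have hdiff : h ^ 2 * bbar / (4 * τ) ≤ h ^ 2 / τ * ζ 0 := by
        have e4 : h ^ 2 / τ * ζ 0 = h ^ 2 * ζ 0 / τ := by ring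
        rw [e4, div_le_div_iff₀ (by positivity) (by positivity)]
        nlinarith [mul_le_mul_of_nonneg_right (mul_le_mul_of_nonneg_left hz (sq_nonneg h)) hτ.le,
          mul_nonneg (mul_nonneg (sq_nonneg h) (hbbar.le.trans hz)) hτ.le]
      nlinarith [mul_le_mul_of_nonneg_right hdiff haw]
    · have e := hi i hi1 hi2
      have hz := hζ i (by omega)
      have hpos : (0:ℝ) < 2 + h ^ 2 / τ * ζ i := by
        have : 0 < h ^ 2 / τ * ζ i := by
          apply mul_pos (by positivity); linarith
        linarith
      have e2 : (2 + h ^ 2 / τ * ζ i) * |w i| ≤ 2 * U := by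
        calc (2 + h ^ 2 / τ * ζ i) * |w i| = |u (i + 1) + u (i - 1)| := by
              rw [← abs_of_pos hpos, ← abs_mul, e]
          _ ≤ |u (i + 1)| + |u (i - 1)| := abs_add_le _ _
          _ ≤ U + U := add_le_add (hU _ (by omega)) (hU _ (by omega))
          _ = 2 * U := by ring
      have haw := abs_nonneg (w i)
      have hdiff : 2 * (h ^ 2 * bbar / (4 * τ)) ≤ h ^ 2 / τ * ζ i := by
        have h1 : 2 * (h ^ 2 * bbar / (4 * τ)) = h ^ 2 * bbar / (2 * τ) := by ring
        have e4 : h ^ 2 / τ * ζ i = h ^ 2 * ζ i / τ := by ring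
        rw [h1, e4, div_le_div_iff₀ (by positivity) (by positivity)]
        nlinarith [mul_le_mul_of_nonneg_right (mul_le_mul_of_nonneg_left hz (sq_nonneg h)) hτ.le,
          mul_nonneg (mul_nonneg (sq_nonneg h) (hbbar.le.trans hz)) hτ.le]
      nlinarith [mul_le_mul_of_nonneg_right hdiff haw]
  refine ⟨⟨inv_pos.mpr hc, inv_lt_one_of_one_lt₀ hc1⟩, ?_⟩
  apply Finset.sup'_le
  intro i hi'
  rw [Finset.mem_range, Nat.lt_succ_iff] at hi'
  have hk : (1 + h ^ 2 * bbar / (4 * τ)) * |w i| ≤ U := by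
    rcases eq_or_lt_of_le hi' with rfl | hlt
    · rw [hlast]; exact key (i - 1) (le_refl _)
    · exact key i (by omega)
  calc |w i| = (1 + h ^ 2 * bbar / (4 * τ))⁻¹ * ((1 + h ^ 2 * bbar / (4 * τ)) * |w i|) :=
        (inv_mul_cancel_left₀ hc.ne' _).symm
    _ ≤ (1 + h ^ 2 * bbar / (4 * τ))⁻¹ * U :=
        mul_le_mul_of_nonneg_left hk (le_of_lt (inv_pos.mpr hc))
end

section
/- Let T > 0, n ∈ ℕ with n ≥ 1, τ = T/n, and let g : [0,T] → ℝ be absolutely continuous with g(t) = g(0) + ∫_0^t g'(s) ds and g' ∈ L²(0,T). Define g_k = (1/τ)∫_{t_{k−1}}^{t_k} g(t) dt for k = 1,…,n and g_0 = g(0), where t_k = kτ. Then Σ_{k=1}^{n} τ ((g_k − g_{k−1})/τ)² ≤ ∫_0^τ g'(s)² ds + ∫_0^T g'(s)² ds. -/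
/-!
Extend `g` to the left by the constant `g 0`. Then `G 0 = g 0` is the Steklov average of the
extension over `[-τ, 0]`, so every difference `G (j + 1) - G j` is `τ⁻¹ ∫₀^τ φ_j`, where `φ_j u`
is the increment of the extension over the window `[(j - 1)τ + u, jτ + u]`. By Cauchy–Schwarz
in `u`, `∑_j (∫₀^τ φ_j)² ≤ τ² · sup_u ∑_j (φ_j u)²`, and by Cauchy–Schwarz inside each window,
`(φ_j u)²` is at most `τ` times the integral of `g'²` over the window clipped at `0`. For fixed
`u` the clipped windows are adjacent subintervals of `[0, T]`.
-/

open MeasureTheory Set Finset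

theorem sq_intervalIntegral_le_mul_intervalIntegral_sq {f : ℝ → ℝ} {a b : ℝ} (hab : a ≤ b)
    (hf : IntervalIntegrable f volume a b)
    (hf2 : IntervalIntegrable (fun x => f x ^ 2) volume a b) :
    (∫ x in a..b, f x) ^ 2 ≤ (b - a) * ∫ x in a..b, f x ^ 2 := by
  set I := ∫ x in a..b, f x
  set S := ∫ x in a..b, f x ^ 2
  have hquad : ∀ c : ℝ, 0 ≤ (b - a) * (c * c) + (-2 * I) * c + S := by
    intro c
    have hexp : ∫ x in a..b, (f x - c) ^ 2 = (b - a) * (c * c) + (-2 * I) * c + S := by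
      have hsq : ∀ x, (f x - c) ^ 2 = f x ^ 2 - (2 * c) * f x + c ^ 2 := fun x => by ring
      simp_rw [hsq]
      rw [intervalIntegral.integral_add (hf2.sub (hf.const_mul _)) intervalIntegrable_const,
        intervalIntegral.integral_sub hf2 (hf.const_mul _),
        intervalIntegral.integral_const_mul, intervalIntegral.integral_const, smul_eq_mul]
      ring
    exact hexp ▸ intervalIntegral.integral_nonneg hab fun x _ => sq_nonneg _
  have hdisc := discrim_le_zero hquad
  rw [discrim] at hdisc
  linarith

theorem sum_sq_intervalIntegral_le {ι : Type*} (s : Finset ι) (φ : ι → ℝ → ℝ) {a b M : ℝ}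
    (hab : a ≤ b) (hφ : ∀ i ∈ s, IntervalIntegrable (φ i) volume a b)
    (hφ2 : ∀ i ∈ s, IntervalIntegrable (fun x => φ i x ^ 2) volume a b)
    (hM : ∀ x ∈ Icc a b, ∑ i ∈ s, φ i x ^ 2 ≤ M) :
    ∑ i ∈ s, (∫ x in a..b, φ i x) ^ 2 ≤ (b - a) ^ 2 * M :=
  calc ∑ i ∈ s, (∫ x in a..b, φ i x) ^ 2
      ≤ ∑ i ∈ s, (b - a) * ∫ x in a..b, φ i x ^ 2 :=
        sum_le_sum fun i hi =>
          sq_intervalIntegral_le_mul_intervalIntegral_sq hab (hφ i hi) (hφ2 i hi)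
    _ = (b - a) * ∫ x in a..b, ∑ i ∈ s, φ i x ^ 2 := by
        rw [← mul_sum, intervalIntegral.integral_finsetSum hφ2]
    _ ≤ (b - a) * ∫ _ in a..b, M := by
        gcongr
        have hsum : IntervalIntegrable (fun x => ∑ i ∈ s, φ i x ^ 2) volume a b := by
          simpa only [Finset.sum_fn] using IntervalIntegrable.sum s hφ2
        exact intervalIntegral.integral_mono_on hab hsum intervalIntegrable_const hM
    _ = (b - a) ^ 2 * M := by
        rw [intervalIntegral.integral_const, smul_eq_mul]; ring

theorem IntervalIntegrable.mono_Icc {f : ℝ → ℝ} {μ : Measure ℝ} {a b c d : ℝ}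
    (hf : IntervalIntegrable f μ a b) (hc : c ∈ Icc a b) (hd : d ∈ Icc a b) :
    IntervalIntegrable f μ c d :=
  hf.mono_set (uIcc_subset_uIcc (Icc_subset_uIcc hc) (Icc_subset_uIcc hd))

theorem sum_intervalIntegral_adjacent_le {f : ℝ → ℝ} {μ : Measure ℝ} {a : ℕ → ℝ} {n : ℕ}
    {lo hi : ℝ}
    (ha : Monotone a) (hlo : lo ≤ a 0) (hhi : a n ≤ hi) (hf0 : ∀ x, 0 ≤ f x)
    (hf : IntervalIntegrable f μ lo hi) :
    ∑ k ∈ range n, ∫ x in a k..a (k + 1), f x ∂μ ≤ ∫ x in lo..hi, f x ∂μ := by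
  have hmem : ∀ k ≤ n, a k ∈ uIcc lo hi := fun k hk =>
    mem_uIcc_of_le (hlo.trans (ha k.zero_le)) ((ha hk).trans hhi)
  rw [intervalIntegral.sum_integral_adjacent_intervals fun k hk =>
    hf.mono_set (uIcc_subset_uIcc (hmem k hk.le) (hmem (k + 1) hk))]
  exact intervalIntegral.integral_mono_interval hlo (ha n.zero_le) hhi
    (Filter.Eventually.of_forall hf0) hf

theorem intervalIntegral_sub_eq_integral_sub_comp_add {h : ℝ → ℝ} {a b τ : ℝ}
    (ha : IntervalIntegrable h volume a (a + τ)) (hb : IntervalIntegrable h volume b (b + τ)) :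
    (∫ x in b..b + τ, h x) - ∫ x in a..a + τ, h x = ∫ u in 0..τ, (h (b + u) - h (a + u)) := by
  rw [intervalIntegral.integral_sub (by simpa using hb.comp_add_left b)
      (by simpa using ha.comp_add_left a),
    intervalIntegral.integral_comp_add_left, intervalIntegral.integral_comp_add_left, add_zero,
    add_zero]

section AbsolutelyContinuous

variable {g g' : ℝ → ℝ} {T : ℝ}

theorem sub_eq_intervalIntegral_of_eq_add_integral
    (hac : ∀ t ∈ Icc 0 T, g t = g 0 + ∫ s in 0..t, g' s) (hg' : IntervalIntegrable g' volume 0 T)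
    {s t : ℝ} (hs : s ∈ Icc 0 T) (ht : t ∈ Icc 0 T) : g t - g s = ∫ x in s..t, g' x := by
  have h0 : (0 : ℝ) ∈ Icc 0 T := ⟨le_rfl, hs.1.trans hs.2⟩
  rw [hac t ht, hac s hs, add_sub_add_left_eq_sub,
    intervalIntegral.integral_interval_sub_left (hg'.mono_Icc h0 ht) (hg'.mono_Icc h0 hs)]

theorem continuousOn_of_eq_add_integral
    (hac : ∀ t ∈ Icc 0 T, g t = g 0 + ∫ s in 0..t, g' s) (hg' : IntervalIntegrable g' volume 0 T) :
    ContinuousOn g (Icc 0 T) :=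
  ((continuousOn_const.add (intervalIntegral.continuousOn_primitive_interval' hg'
    left_mem_uIcc)).mono Icc_subset_uIcc).congr hac

theorem ContinuousOn.comp_max_zero (hg : ContinuousOn g (Icc 0 T)) (hT : 0 ≤ T) :
    ContinuousOn (fun t => g (max t 0)) (Iic T) :=
  hg.comp (continuous_id.max continuous_const).continuousOn
    fun _ ht => ⟨le_max_right _ _, max_le ht hT⟩

theorem sum_sq_sub_comp_max_zero_le
    (hac : ∀ t ∈ Icc 0 T, g t = g 0 + ∫ s in 0..t, g' s) (hg' : IntervalIntegrable g' volume 0 T)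
    (hsq : IntervalIntegrable (fun x => g' x ^ 2) volume 0 T)
    {τ : ℝ} {n : ℕ} (hnτ : n * τ ≤ T) {u : ℝ} (hu : u ∈ Icc 0 τ) :
    ∑ j ∈ range n, (g (max (j * τ + u) 0) - g (max ((j - 1) * τ + u) 0)) ^ 2
      ≤ τ * ∫ x in 0..T, g' x ^ 2 := by
  have hτ : 0 ≤ τ := hu.1.trans hu.2
  set a : ℕ → ℝ := fun j => max (((j : ℝ) - 1) * τ + u) 0
  have ha_mono : Monotone a := fun i j hij => by
    have : (i : ℝ) ≤ j := by exact_mod_cast hij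
    simp only [a]
    gcongr
  have ha_succ : ∀ j : ℕ, a (j + 1) = max (j * τ + u) 0 := fun j => by
    simp only [a, Nat.cast_succ, add_sub_cancel_right]
  have ha_mem : ∀ j ≤ n, a j ∈ Icc 0 T := fun j hj => by
    have : (j : ℝ) ≤ n := by exact_mod_cast hj
    exact ⟨le_max_right _ _,
      max_le (by nlinarith [hu.2]) ((by positivity : (0 : ℝ) ≤ n * τ).trans hnτ)⟩
  have hstep : ∀ j < n, (g (a (j + 1)) - g (a j)) ^ 2 ≤ τ * ∫ x in a j..a (j + 1), g' x ^ 2 := by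
    intro j hj
    have hj0 := ha_mem j hj.le
    have hj1 := ha_mem (j + 1) hj
    have hle : a j ≤ a (j + 1) := ha_mono j.le_succ
    have hgap : a (j + 1) - a j ≤ τ := by
      refine (le_abs_self _).trans ((abs_max_sub_max_le_abs _ _ _).trans (le_of_eq ?_))
      push_cast
      rw [show ((j : ℝ) + 1 - 1) * τ + u - (((j : ℝ) - 1) * τ + u) = τ by ring, abs_of_nonneg hτ]
    rw [sub_eq_intervalIntegral_of_eq_add_integral hac hg' hj0 hj1]
    calc _ ≤ (a (j + 1) - a j) * ∫ x in a j..a (j + 1), g' x ^ 2 :=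
          sq_intervalIntegral_le_mul_intervalIntegral_sq hle (hg'.mono_Icc hj0 hj1)
            (hsq.mono_Icc hj0 hj1)
      _ ≤ τ * ∫ x in a j..a (j + 1), g' x ^ 2 := by
          gcongr
          exact intervalIntegral.integral_nonneg hle fun _ _ => sq_nonneg _
  calc _ = ∑ j ∈ range n, (g (a (j + 1)) - g (a j)) ^ 2 :=
        sum_congr rfl fun j _ => by rw [ha_succ]
    _ ≤ ∑ j ∈ range n, τ * ∫ x in a j..a (j + 1), g' x ^ 2 :=
        sum_le_sum fun j hj => hstep j (mem_range.1 hj)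
    _ ≤ τ * ∫ x in 0..T, g' x ^ 2 := by
        rw [← mul_sum]
        gcongr
        exact sum_intervalIntegral_adjacent_le ha_mono (ha_mem 0 n.zero_le).1 (ha_mem n le_rfl).2
          (fun _ => sq_nonneg _) hsq

end AbsolutelyContinuous

theorem ContinuousOn.comp_const_add_Icc {h : ℝ → ℝ} {T c τ : ℝ} (hh : ContinuousOn h (Iic T))
    (hc : c + τ ≤ T) : ContinuousOn (fun u => h (c + u)) (Icc 0 τ) :=
  hh.comp (continuous_const_add c).continuousOn fun _ hu => (add_le_add_right hu.2 c).trans hc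

theorem eq_inv_mul_integral_comp_max_zero {g : ℝ → ℝ} {G : ℕ → ℝ} {τ : ℝ} {n : ℕ} (hτ : 0 < τ)
    (hG0 : G 0 = g 0)
    (hGk : ∀ k, 1 ≤ k → k ≤ n → G k = (1 / τ) * ∫ t in ((k : ℝ) - 1) * τ..(k : ℝ) * τ, g t)
    {k : ℕ} (hk : k ≤ n) :
    G k = τ⁻¹ * ∫ t in ((k : ℝ) - 1) * τ..((k : ℝ) - 1) * τ + τ, g (max t 0) := by
  rcases k.eq_zero_or_pos with rfl | hk0
  · have hconst : ∫ t in (((0 : ℕ) : ℝ) - 1) * τ..(((0 : ℕ) : ℝ) - 1) * τ + τ, g (max t 0)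
        = ∫ _ in (-τ)..0, g 0 := by
      rw [show (((0 : ℕ) : ℝ) - 1) * τ = -τ by simp, neg_add_cancel]
      refine intervalIntegral.integral_congr fun t ht => ?_
      rw [Set.uIcc_of_le (by linarith)] at ht
      simp only [max_eq_right ht.2]
    rw [hconst, intervalIntegral.integral_const, smul_eq_mul, sub_neg_eq_add, zero_add,
      inv_mul_cancel_left₀ hτ.ne', hG0]
  · have hk1 : (1 : ℝ) ≤ k := by exact_mod_cast hk0
    rw [hGk k hk0 hk, one_div, show (k : ℝ) * τ = ((k : ℝ) - 1) * τ + τ by ring]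
    congr 1
    refine intervalIntegral.integral_congr fun t ht => ?_
    rw [Set.uIcc_of_le (by linarith)] at ht
    simp only [max_eq_left ((by nlinarith : (0:ℝ) ≤ ((k : ℝ) - 1) * τ).trans ht.1)]

theorem sub_eq_inv_mul_integral_sub_comp_add {h : ℝ → ℝ} {G : ℕ → ℝ} {τ T : ℝ} {n : ℕ}
    (hh : ContinuousOn h (Iic T)) (hτ : 0 ≤ τ) (hnτ : n * τ ≤ T)
    (hG : ∀ k ≤ n, G k = τ⁻¹ * ∫ t in ((k : ℝ) - 1) * τ..((k : ℝ) - 1) * τ + τ, h t)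
    {j : ℕ} (hj : j < n) :
    G (j + 1) - G j = τ⁻¹ * ∫ u in 0..τ, (h (j * τ + u) - h ((j - 1) * τ + u)) := by
  have hint : ∀ x, x + τ ≤ T → IntervalIntegrable h volume x (x + τ) := fun x hx =>
    (hh.mono fun t ht => by
      rw [Set.uIcc_of_le (by linarith)] at ht
      exact ht.2.trans hx).intervalIntegrable
  have hjn : (j : ℝ) + 1 ≤ n := by exact_mod_cast hj
  rw [hG (j + 1) hj, hG j hj.le, ← mul_sub, Nat.cast_succ, add_sub_cancel_right,
    intervalIntegral_sub_eq_integral_sub_comp_add (hint _ (by nlinarith)) (hint _ (by nlinarith))]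

theorem steklov_difference_quotients_bound_general (T : ℝ) (hT : 0 < T) (n : ℕ) (hn : 1 ≤ n)
    (g g' : ℝ → ℝ)
    (hac : ∀ t ∈ Set.Icc (0 : ℝ) T, g t = g 0 + ∫ s in (0 : ℝ)..t, g' s)
    (hL2 : MemLp g' 2 (volume.restrict (Set.Ioc (0 : ℝ) T)))
    (G : ℕ → ℝ) (hG0 : G 0 = g 0)
    (hGk : ∀ k, 1 ≤ k → k ≤ n →
      G k = (1 / (T / n)) * ∫ t in ((k : ℝ) - 1) * (T / n)..(k : ℝ) * (T / n), g t) :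
    ∑ k ∈ Finset.Icc 1 n, (T / n) * ((G k - G (k - 1)) / (T / n)) ^ 2
      ≤ (∫ s in (0 : ℝ)..(T / n), (g' s) ^ 2) + ∫ s in (0 : ℝ)..T, (g' s) ^ 2 := by
  set τ := T / n
  have hτ : 0 < τ := div_pos hT (by exact_mod_cast hn)
  have hnτ : n * τ = T := mul_div_cancel₀ T (by positivity)
  have hg' : IntervalIntegrable g' volume 0 T :=
    (intervalIntegrable_iff_integrableOn_Ioc_of_le hT.le).2 (hL2.integrable one_le_two)
  have hsq : IntervalIntegrable (fun x => g' x ^ 2) volume 0 T :=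
    (intervalIntegrable_iff_integrableOn_Ioc_of_le hT.le).2 hL2.integrable_sq
  have hh := (continuousOn_of_eq_add_integral hac hg').comp_max_zero hT.le
  set φ : ℕ → ℝ → ℝ := fun j u => g (max (j * τ + u) 0) - g (max ((j - 1) * τ + u) 0)
  have hφ : ∀ j ∈ range n, ContinuousOn (φ j) (uIcc 0 τ) := by
    intro j hj
    have hjn : (j : ℝ) + 1 ≤ n := by exact_mod_cast mem_range.1 hj
    rw [Set.uIcc_of_le hτ.le]
    exact (hh.comp_const_add_Icc (by nlinarith)).sub (hh.comp_const_add_Icc (by nlinarith))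
  have hdiff : ∀ j ∈ range n, G (j + 1) - G j = τ⁻¹ * ∫ u in 0..τ, φ j u := fun j hj =>
    sub_eq_inv_mul_integral_sub_comp_add hh hτ.le hnτ.le
      (fun k hk => eq_inv_mul_integral_comp_max_zero hτ hG0 hGk hk) (mem_range.1 hj)
  calc ∑ k ∈ Icc 1 n, τ * ((G k - G (k - 1)) / τ) ^ 2
      = (∑ j ∈ range n, (∫ u in 0..τ, φ j u) ^ 2) / τ ^ 3 := by
        rw [← Finset.Ico_add_one_right_eq_Icc, sum_Ico_eq_sum_range, sum_div]
        refine sum_congr (by simp) fun j hj => ?_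
        rw [add_comm 1 j, Nat.add_sub_cancel, hdiff j hj]
        field_simp
    _ ≤ τ ^ 2 * (τ * ∫ x in 0..T, g' x ^ 2) / τ ^ 3 := by
        gcongr
        simpa only [sub_zero] using sum_sq_intervalIntegral_le _ _ hτ.le
          (fun j hj => (hφ j hj).intervalIntegrable)
          (fun j hj => ((hφ j hj).pow 2).intervalIntegrable)
          fun u hu => sum_sq_sub_comp_max_zero_le hac hg' hsq hnτ.le hu
    _ = ∫ x in 0..T, g' x ^ 2 := by field_simp
    _ ≤ _ := le_add_of_nonneg_left (intervalIntegral.integral_nonneg hτ.le fun _ _ => sq_nonneg _)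

/-- Bound on the discrete time-difference quotients of the Steklov averages of an
absolutely continuous function with square-integrable derivative. -/
theorem steklov_difference_quotients_bound (T : ℝ) (hT : 0 < T) (n : ℕ) (hn : 1 ≤ n)
    (g g' : ℝ → ℝ)
    (hint : IntegrableOn g' (Set.Icc (0 : ℝ) T))
    (hac : ∀ t ∈ Set.Icc (0 : ℝ) T, g t = g 0 + ∫ s in (0 : ℝ)..t, g' s)
    (hL2 : MemLp g' 2 (volume.restrict (Set.Ioc (0 : ℝ) T)))
    (G : ℕ → ℝ) (hG0 : G 0 = g 0)
    (hGk : ∀ k, 1 ≤ k → k ≤ n →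
      G k = (1 / (T / n)) * ∫ t in ((k : ℝ) - 1) * (T / n)..(k : ℝ) * (T / n), g t) :
    ∑ k ∈ Finset.Icc 1 n, (T / n) * ((G k - G (k - 1)) / (T / n)) ^ 2
      ≤ (∫ s in (0 : ℝ)..(T / n), (g' s) ^ 2) + ∫ s in (0 : ℝ)..T, (g' s) ^ 2 :=
  steklov_difference_quotients_bound_general T hT n hn g g' hac hL2 G hG0 hGk
end

section
/- Let T > 0, R > 0, n ∈ ℕ with n ≥ 1, τ = T/n, and let [g]_n = (g_0,…,g_n) ∈ ℝ^{n+1} satisfy ‖[g]_n‖_{w¹₂} ≤ R. Let g^n = P_n([g]_n) be the piecewise linear interpolation of [g]_n. Then (i) ‖g^n‖²_{W¹₂(0,T)} ≤ ‖[g]_n‖²_{w¹₂} + C√T·√τ·√(Σ_{k=1}^n τ g_k²) + (τ²/3)·Σ_{k=1}^n τ ((g_k − g_{k−1})/τ)², where C = √(Σ_{k=1}^n τ ((g_k − g_{k−1})/τ)²); and (ii) for every ε > 0 there exists N (depending only on T, R, ε) such that ‖g^n‖_{W¹₂(0,T)} ≤ R + ε whenever n ≥ N. -/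
/-!
On each cell `[kτ, (k+1)τ)` the interpolant is affine with slope `d_k = (g_{k+1} - g_k)/τ`, so
`∫ (gⁿ)'²` is exactly the discrete sum `Σ τ d_k²`, while the cell contributes
`τ g_k² + τ² g_k d_k + τ³ d_k²/3` to `∫ (gⁿ)²`. Since `g_{k+1} = g_k + τ d_k`, the first two terms
equal `τ g_{k+1}² - τ² g_{k+1} d_k`; Cauchy–Schwarz bounds the cross term by `τ √A √D` with
`A = Σ τ g_{k+1}²`, `D = Σ τ d_k²`, and `τ ≤ √T √τ` gives (i). Under `A + D ≤ R²` the excess of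
(i) over `R²` is at most `(√T √τ + τ²/3) R²`, which tends to `0` as `n → ∞`; this gives (ii).
-/

open MeasureTheory

/-- The square of the discrete Sobolev norm `‖[g]_n‖²_{w¹₂}`. -/
noncomputable def discNormSq (T : ℝ) (n : ℕ) (G : ℕ → ℝ) : ℝ :=
  ∑ k ∈ Finset.Icc 1 n, (T / n) * (G k) ^ 2
    + ∑ k ∈ Finset.Icc 1 n, (T / n) * ((G k - G (k - 1)) / (T / n)) ^ 2

/-- `gn` is the continuous piecewise linear interpolation `P_n([g]_n)` of `G = [g]_n`. -/
def Interpolates (T : ℝ) (n : ℕ) (G : ℕ → ℝ) (gn : ℝ → ℝ) : Prop :=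
  ∀ k, 1 ≤ k → k ≤ n →
    ∀ t ∈ Set.Ico (((k : ℝ) - 1) * (T / n)) ((k : ℝ) * (T / n)),
      gn t = G (k - 1) + (G k - G (k - 1)) / (T / n) * (t - ((k : ℝ) - 1) * (T / n))

/-- The square of the `W¹₂(0,T)` norm, `∫_0^T g² + ∫_0^T g'²` (with the a.e. derivative). -/
noncomputable def W12NormSq (T : ℝ) (g : ℝ → ℝ) : ℝ :=
  (∫ t in (0 : ℝ)..T, (g t) ^ 2) + ∫ t in (0 : ℝ)..T, (deriv g t) ^ 2

open Set Filter Topology intervalIntegral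
open scoped Interval

lemma sum_Icc_one_eq_sum_range {M : Type*} [AddCommMonoid M] (n : ℕ) (f : ℕ → M) :
    ∑ k ∈ Finset.Icc 1 n, f k = ∑ k ∈ Finset.range n, f (k + 1) := by
  rw [← Finset.Ico_add_one_right_eq_Icc, Finset.sum_Ico_eq_sum_range]
  simp only [add_tsub_cancel_right, add_comm]

lemma integral_affine_sq (p d a h : ℝ) :
    ∫ t in a..a + h, (p + d * (t - a)) ^ 2 = h * p ^ 2 + h ^ 2 * (p * d) + h ^ 3 * d ^ 2 / 3 := by
  have hderiv : ∀ x ∈ uIcc a (a + h), HasDerivAt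
      (fun t => p ^ 2 * (t - a) + p * d * (t - a) ^ 2 + d ^ 2 / 3 * (t - a) ^ 3)
      ((p + d * (x - a)) ^ 2) x := by
    intro x _
    have hx : HasDerivAt (fun t : ℝ => t - a) 1 x := (hasDerivAt_id x).sub_const a
    exact (((hx.const_mul (p ^ 2)).add ((hx.pow 2).const_mul (p * d))).add
      ((hx.pow 3).const_mul (d ^ 2 / 3))).congr_deriv (by norm_num; ring)
  rw [integral_eq_sub_of_hasDerivAt hderiv ((by fun_prop : Continuous fun t => (p + d * (t - a)) ^ 2).intervalIntegrable _ _)]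
  ring

section PiecewiseAffine

variable {f : ℝ → ℝ} {p d a b : ℝ}

lemma ae_restrict_uIoc_of_eqOn_Ico {E : Type*} {f g : ℝ → E} (hab : a ≤ b)
    (h : EqOn f g (Ico a b)) : f =ᵐ[Measure.restrict volume (Ι a b)] g := by
  rw [uIoc_of_le hab, Measure.restrict_congr_set Ico_ae_eq_Ioc.symm]
  exact ae_restrict_of_forall_mem measurableSet_Ico h

lemma deriv_ae_restrict_uIoc_of_eqOn_Ico (hab : a ≤ b)
    (h : EqOn f (fun t => p + d * (t - a)) (Ico a b)) :
    deriv f =ᵐ[Measure.restrict volume (Ι a b)] fun _ => d := by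
  rw [uIoc_of_le hab, Measure.restrict_congr_set Ioo_ae_eq_Ioc.symm]
  refine ae_restrict_of_forall_mem measurableSet_Ioo fun t ht => ?_
  rw [(h.mono Ioo_subset_Ico_self).deriv isOpen_Ioo ht]
  simp

lemma integral_sq_of_eqOn_affine {h : ℝ} (hh : 0 ≤ h)
    (hf : EqOn f (fun t => p + d * (t - a)) (Ico a (a + h))) :
    IntervalIntegrable (fun t => f t ^ 2) volume a (a + h) ∧
      ∫ t in a..a + h, f t ^ 2 = h * p ^ 2 + h ^ 2 * (p * d) + h ^ 3 * d ^ 2 / 3 := by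
  have hae : (fun t => f t ^ 2) =ᵐ[volume.restrict (Ι a (a + h))] fun t => (p + d * (t - a)) ^ 2 :=
    (ae_restrict_uIoc_of_eqOn_Ico (by linarith) hf).fun_comp (· ^ 2)
  refine ⟨?_, ?_⟩
  · exact (by fun_prop : Continuous fun t => (p + d * (t - a)) ^ 2).intervalIntegrable _ _
      |>.congr_ae hae.symm
  · rw [integral_congr_ae_restrict hae, integral_affine_sq]

lemma integral_deriv_sq_of_eqOn_affine (hab : a ≤ b)
    (hf : EqOn f (fun t => p + d * (t - a)) (Ico a b)) :
    IntervalIntegrable (fun t => deriv f t ^ 2) volume a b ∧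
      ∫ t in a..b, deriv f t ^ 2 = (b - a) * d ^ 2 := by
  have hae : (fun t => deriv f t ^ 2) =ᵐ[volume.restrict (Ι a b)] fun _ => d ^ 2 :=
    (deriv_ae_restrict_uIoc_of_eqOn_Ico hab hf).fun_comp (· ^ 2)
  refine ⟨intervalIntegrable_const.congr_ae hae.symm, ?_⟩
  rw [integral_congr_ae_restrict hae, intervalIntegral.integral_const, smul_eq_mul]

end PiecewiseAffine

section Partition

variable {f : ℝ → ℝ} {G D : ℕ → ℝ} {τ : ℝ} {n : ℕ}

lemma integral_sq_of_piecewise_affine (hτ : 0 ≤ τ)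
    (hf : ∀ k < n, EqOn f (fun t => G k + D k * (t - k * τ)) (Ico (k * τ) ((k + 1) * τ))) :
    ∫ t in (0 : ℝ)..n * τ, f t ^ 2
      = ∑ k ∈ Finset.range n, (τ * G k ^ 2 + τ ^ 2 * (G k * D k) + τ ^ 3 * D k ^ 2 / 3) := by
  have hpiece (k : ℕ) (hk : k < n) := integral_sq_of_eqOn_affine hτ
    (by simpa only [add_mul, one_mul] using hf k hk)
  have hsum := sum_integral_adjacent_intervals (μ := volume) (a := fun k : ℕ => k * τ)
    fun k hk => by simpa only [Nat.cast_succ, add_mul, one_mul] using (hpiece k hk).1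
  simp only [Nat.cast_zero, zero_mul, Nat.cast_succ, add_mul, one_mul] at hsum
  rw [← hsum]
  exact Finset.sum_congr rfl fun k hk => (hpiece k (Finset.mem_range.1 hk)).2

lemma integral_deriv_sq_of_piecewise_affine (hτ : 0 ≤ τ)
    (hf : ∀ k < n, EqOn f (fun t => G k + D k * (t - k * τ)) (Ico (k * τ) ((k + 1) * τ))) :
    ∫ t in (0 : ℝ)..n * τ, deriv f t ^ 2 = ∑ k ∈ Finset.range n, τ * D k ^ 2 := by
  have hpiece (k : ℕ) (hk : k < n) :=
    integral_deriv_sq_of_eqOn_affine (by nlinarith) (hf k hk)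
  have hsum := sum_integral_adjacent_intervals (μ := volume) (a := fun k : ℕ => k * τ)
    fun k hk => by simpa only [Nat.cast_succ] using (hpiece k hk).1
  simp only [Nat.cast_zero, zero_mul, Nat.cast_succ] at hsum
  rw [← hsum]
  refine Finset.sum_congr rfl fun k hk => ?_
  rw [(hpiece k (Finset.mem_range.1 hk)).2]
  ring

end Partition

lemma sum_sq_add_mul_slope_le {τ : ℝ} (hτ : 0 < τ) (G : ℕ → ℝ) (n : ℕ) :
    ∑ k ∈ Finset.range n, (τ * G k ^ 2 + τ ^ 2 * (G k * ((G (k + 1) - G k) / τ)))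
      ≤ ∑ k ∈ Finset.range n, τ * G (k + 1) ^ 2
        + τ * (√(∑ k ∈ Finset.range n, τ * G (k + 1) ^ 2)
          * √(∑ k ∈ Finset.range n, τ * ((G (k + 1) - G k) / τ) ^ 2)) := by
  set d : ℕ → ℝ := fun k => (G (k + 1) - G k) / τ
  have hG (k : ℕ) : G (k + 1) = G k + τ * d k := by
    rw [mul_div_cancel₀ _ hτ.ne']; ring
  have hsq : √τ ^ 2 = τ := Real.sq_sqrt hτ.le
  have hterm (k : ℕ) : τ * G k ^ 2 + τ ^ 2 * (G k * d k)
      = τ * G (k + 1) ^ 2 + τ * (-(√τ * G (k + 1)) * (√τ * d k)) := by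
    rw [hG]
    linear_combination τ * d k * (G k + τ * d k) * hsq
  rw [Finset.sum_congr rfl fun k _ => hterm k, Finset.sum_add_distrib]
  have hCS := Real.sum_mul_le_sqrt_mul_sqrt (Finset.range n)
    (fun k => -(√τ * G (k + 1))) (fun k => √τ * d k)
  simp only [neg_sq, mul_pow, hsq] at hCS
  have hCS' := mul_le_mul_of_nonneg_left hCS hτ.le
  rw [Finset.mul_sum] at hCS'
  exact add_le_add_right hCS' _

lemma Interpolates.eqOn_Ico {T : ℝ} {n : ℕ} {G : ℕ → ℝ} {gn : ℝ → ℝ}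
    (h : Interpolates T n G gn) {k : ℕ} (hk : k < n) :
    EqOn gn (fun t => G k + (G (k + 1) - G k) / (T / n) * (t - k * (T / n)))
      (Ico (k * (T / n)) ((k + 1) * (T / n))) := by
  intro t ht
  simpa using h (k + 1) le_add_self hk t (by simpa using ht)

lemma W12NormSq_le_of_interpolates {T : ℝ} {n : ℕ} {G : ℕ → ℝ} {gn : ℝ → ℝ} (hT : 0 < T)
    (hn : 1 ≤ n) (hI : Interpolates T n G gn) :
    W12NormSq T gn
      ≤ discNormSq T n G
        + √(∑ k ∈ Finset.Icc 1 n, (T / n) * ((G k - G (k - 1)) / (T / n)) ^ 2)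
          * √T * √(T / n) * √(∑ k ∈ Finset.Icc 1 n, (T / n) * G k ^ 2)
        + ((T / n) ^ 2 / 3) * ∑ k ∈ Finset.Icc 1 n, (T / n) * ((G k - G (k - 1)) / (T / n)) ^ 2 := by
  simp only [discNormSq, sum_Icc_one_eq_sum_range, Nat.add_sub_cancel]
  have hn0 : (0 : ℝ) < n := Nat.cast_pos.2 hn
  have hT_eq : T = n * (T / n) := (mul_div_cancel₀ T hn0.ne').symm
  have hpieces (k : ℕ) (hk : k < n) := hI.eqOn_Ico hk
  have hτT : T / n ≤ T := div_le_self hT.le (by exact_mod_cast hn)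
  set τ := T / n
  have hτ : 0 < τ := div_pos hT hn0
  set A := ∑ k ∈ Finset.range n, τ * G (k + 1) ^ 2
  set D := ∑ k ∈ Finset.range n, τ * ((G (k + 1) - G k) / τ) ^ 2
  have hW : W12NormSq T gn
      = ∑ k ∈ Finset.range n, (τ * G k ^ 2 + τ ^ 2 * (G k * ((G (k + 1) - G k) / τ)))
        + (τ ^ 2 / 3) * D + D := by
    rw [W12NormSq, hT_eq, integral_sq_of_piecewise_affine hτ.le hpieces,
      integral_deriv_sq_of_piecewise_affine hτ.le hpieces, Finset.sum_add_distrib, Finset.mul_sum]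
    congr 2
    exact Finset.sum_congr rfl fun k _ => by ring
  have hcross : τ * (√A * √D) ≤ √D * √T * √τ * √A := by
    calc τ * (√A * √D) = √τ * √τ * (√A * √D) := by rw [Real.mul_self_sqrt hτ.le]
      _ ≤ √T * √τ * (√A * √D) := by gcongr
      _ = √D * √T * √τ * √A := by ring
  linarith [sum_sq_add_mul_slope_le hτ G n]

lemma W12NormSq_le_of_sqrt_discNormSq_le {T R : ℝ} {n : ℕ} {G : ℕ → ℝ} {gn : ℝ → ℝ}
    (hT : 0 < T) (hn : 1 ≤ n) (hG : √(discNormSq T n G) ≤ R) (hI : Interpolates T n G gn) :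
    W12NormSq T gn ≤ R ^ 2 + (√T * √(T / n) + (T / n) ^ 2 / 3) * R ^ 2 := by
  set A := ∑ k ∈ Finset.Icc 1 n, (T / n) * G k ^ 2
  set D := ∑ k ∈ Finset.Icc 1 n, (T / n) * ((G k - G (k - 1)) / (T / n)) ^ 2
  have hA : 0 ≤ A := Finset.sum_nonneg fun k _ => by positivity
  have hD : 0 ≤ D := Finset.sum_nonneg fun k _ => by positivity
  have hdisc : discNormSq T n G = A + D := rfl
  have hR : 0 ≤ R := (Real.sqrt_nonneg _).trans hG
  have hdiscR : discNormSq T n G ≤ R ^ 2 := (Real.sqrt_le_iff.1 hG).2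
  have hAR : √A ≤ R := (Real.sqrt_le_sqrt (by linarith)).trans hG
  have hDR : √D ≤ R := (Real.sqrt_le_sqrt (by linarith)).trans hG
  calc W12NormSq T gn ≤ discNormSq T n G + √D * √T * √(T / n) * √A + ((T / n) ^ 2 / 3) * D :=
        W12NormSq_le_of_interpolates hT hn hI
    _ ≤ R ^ 2 + R * √T * √(T / n) * R + ((T / n) ^ 2 / 3) * R ^ 2 := by
        gcongr
        linarith
    _ = R ^ 2 + (√T * √(T / n) + (T / n) ^ 2 / 3) * R ^ 2 := by ring

theorem interp_W12_norm_bound_general (T R : ℝ) (hT : 0 < T) :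
    (∀ n : ℕ, 1 ≤ n → ∀ G : ℕ → ℝ, Real.sqrt (discNormSq T n G) ≤ R →
      ∀ gn : ℝ → ℝ, Interpolates T n G gn →
        W12NormSq T gn
          ≤ discNormSq T n G
            + Real.sqrt (∑ k ∈ Finset.Icc 1 n, (T / n) * ((G k - G (k - 1)) / (T / n)) ^ 2)
              * Real.sqrt T * Real.sqrt (T / n)
              * Real.sqrt (∑ k ∈ Finset.Icc 1 n, (T / n) * (G k) ^ 2)
            + ((T / n) ^ 2 / 3)
              * ∑ k ∈ Finset.Icc 1 n, (T / n) * ((G k - G (k - 1)) / (T / n)) ^ 2) ∧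
    (∀ ε : ℝ, 0 < ε → ∃ N : ℕ, ∀ n : ℕ, N ≤ n → 1 ≤ n →
      ∀ G : ℕ → ℝ, Real.sqrt (discNormSq T n G) ≤ R →
        ∀ gn : ℝ → ℝ, Interpolates T n G gn →
          Real.sqrt (W12NormSq T gn) ≤ R + ε) := by
  refine ⟨fun n hn G _ gn hI => W12NormSq_le_of_interpolates hT hn hI, fun ε hε => ?_⟩
  have hlim : Tendsto (fun n : ℕ => (√T * √(T / n) + (T / n) ^ 2 / 3) * R ^ 2) atTop (𝓝 0) := by
    have hc : Continuous fun τ : ℝ => (√T * √τ + τ ^ 2 / 3) * R ^ 2 := by fun_prop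
    exact (hc.tendsto' 0 0 (by simp)).comp (tendsto_const_div_atTop_nhds_zero_nat T)
  obtain ⟨N, hN⟩ := eventually_atTop.1 (hlim.eventually (gt_mem_nhds (pow_pos hε 2)))
  refine ⟨N, fun n hNn hn G hG gn hI => ?_⟩
  have hR : 0 ≤ R := (Real.sqrt_nonneg _).trans hG
  refine Real.sqrt_le_iff.2 ⟨by positivity, ?_⟩
  nlinarith [W12NormSq_le_of_sqrt_discNormSq_le hT hn hG hI, hN n hNn]

/-- (i) the bound `‖g^n‖²_{W¹₂} ≤ ‖[g]_n‖²_{w¹₂} + C√T√τ√(Στg_k²) + (τ²/3)Στ((g_k−g_{k−1})/τ)²`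
with `C = √(Στ((g_k−g_{k−1})/τ)²)`; and (ii) for every `ε > 0` there is `N` (depending only on
`T, R, ε`) with `‖g^n‖_{W¹₂} ≤ R + ε` for `n ≥ N`. -/
theorem interp_W12_norm_bound (T R : ℝ) (hT : 0 < T) (hR : 0 < R) :
    (∀ n : ℕ, 1 ≤ n → ∀ G : ℕ → ℝ, Real.sqrt (discNormSq T n G) ≤ R →
      ∀ gn : ℝ → ℝ, Interpolates T n G gn →
        W12NormSq T gn
          ≤ discNormSq T n G
            + Real.sqrt (∑ k ∈ Finset.Icc 1 n, (T / n) * ((G k - G (k - 1)) / (T / n)) ^ 2)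
              * Real.sqrt T * Real.sqrt (T / n)
              * Real.sqrt (∑ k ∈ Finset.Icc 1 n, (T / n) * (G k) ^ 2)
            + ((T / n) ^ 2 / 3)
              * ∑ k ∈ Finset.Icc 1 n, (T / n) * ((G k - G (k - 1)) / (T / n)) ^ 2) ∧
    (∀ ε : ℝ, 0 < ε → ∃ N : ℕ, ∀ n : ℕ, N ≤ n → 1 ≤ n →
      ∀ G : ℕ → ℝ, Real.sqrt (discNormSq T n G) ≤ R →
        ∀ gn : ℝ → ℝ, Interpolates T n G gn →
          Real.sqrt (W12NormSq T gn) ≤ R + ε) :=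
  interp_W12_norm_bound_general T R hT
end

section
/- (A priori energy estimate for the Neumann problem for the heat equation with bounded measurable diffusion coefficient.) Let ℓ, T, a_0 > 0, D = (0,ℓ)×(0,T), and let a : D → ℝ be measurable with 0 ≤ a(x,t) ≤ a_0 for a.e. (x,t) ∈ D. Let F be continuously differentiable on the closure of D, and let ψ be continuous on the closure of D with continuous partial derivatives ψ_t, ψ_x, ψ_xx on the closure of D, satisfying ψ(x,0) = 0 for all x ∈ [0,ℓ], ψ_x(0,t) = ψ_x(ℓ,t) = 0 for all t ∈ [0,T], and ψ_t(x,t) = a(x,t)ψ_xx(x,t) + F(x,t) for a.e. (x,t) ∈ D. Then ∫_0^T∫_0^ℓ ( ψ_t² + a ψ_xx² ) dx dt + sup_{0≤t≤T} ∫_0^ℓ ψ_x(x,t)² dx ≤ 2 ∫_0^T∫_0^ℓ F² dx dt + (2a_0 + 2) e^T ∫_0^T∫_0^ℓ F_x² dx dt. -/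
/-!
Multiplying the equation by `ψ_xx` and integrating by parts in `x` (Neumann condition) gives
`d/dt ∫ ψ_x² = -2 ∫ ψ_t ψ_xx = -2 ∫ a ψ_xx² + 2 ∫ F_x ψ_x`. Since `ψ_xt` is not assumed to
exist, this derivative is obtained from `N s v = ∫ ψ(·, s) ψ_xx(·, v) = -∫ ψ_x(·, s) ψ_x(·, v)`:
`N` is symmetric and differentiable in `s`, so `t ↦ N t t = -∫ ψ_x(·, t)²` has derivative
`2 ∫ ψ_t ψ_xx`. Young's inequality and Grönwall's lemma then bound
`∫ ψ_x(·, t)² + 2 ∫_0^t ∫ a ψ_xx²` by `e^t ∫∫ F_x²`, and the equation gives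
`ψ_t² ≤ 2 a0 · a ψ_xx² + 2 F²` pointwise.
-/

open MeasureTheory Set Filter Topology intervalIntegral
open scoped Interval

theorem continuousOn_primitive_of_continuousOn {f : ℝ → ℝ} {a b : ℝ} (hab : a ≤ b)
    (hf : ContinuousOn f (Icc a b)) : ContinuousOn (fun u => ∫ t in a..u, f t) (Icc a b) := by
  simpa only [uIcc_of_le hab] using
    continuousOn_primitive_interval' (hf.intervalIntegrable_of_Icc hab) left_mem_uIcc

theorem continuousOn_intervalIntegral_of_continuousOn_prod {X : Type*} [TopologicalSpace X]
    [FirstCountableTopology X] {S : Set X} (hS : IsCompact S) {f : ℝ → X → ℝ} {a b : ℝ}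
    (hab : a ≤ b)
    (hf : ContinuousOn (fun q : ℝ × X => f q.1 q.2) (Icc a b ×ˢ S)) :
    ContinuousOn (fun p => ∫ x in a..b, f x p) S := by
  obtain ⟨C, hC⟩ := (isCompact_Icc.prod hS).exists_bound_of_continuousOn hf
  have hIoc : Ι a b ⊆ Icc a b := by rw [uIoc_of_le hab]; exact Ioc_subset_Icc_self
  intro p hp
  refine continuousWithinAt_of_dominated_interval (bound := fun _ => C) ?_ ?_
    intervalIntegrable_const ?_
  · filter_upwards [self_mem_nhdsWithin] with q hq
    exact ((hf.uncurry_right q hq).mono hIoc).aestronglyMeasurable measurableSet_uIoc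
  · filter_upwards [self_mem_nhdsWithin] with q hq
    exact ae_of_all _ fun x hx => hC (x, q) ⟨hIoc hx, hq⟩
  · exact ae_of_all _ fun x hx => hf.uncurry_left x (hIoc hx) p hp

theorem hasDerivAt_intervalIntegral_of_continuousOn {f f' : ℝ → ℝ → ℝ} {a b c d s : ℝ}
    (hab : a ≤ b) (hf : ∀ s ∈ Ioo c d, ContinuousOn (f · s) (Icc a b))
    (hf' : ContinuousOn (fun q : ℝ × ℝ => f' q.1 q.2) (Icc a b ×ˢ Icc c d))
    (hderiv : ∀ x ∈ Icc a b, ∀ s ∈ Ioo c d, HasDerivAt (f x ·) (f' x s) s)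
    (hs : s ∈ Ioo c d) :
    HasDerivAt (fun s => ∫ x in a..b, f x s) (∫ x in a..b, f' x s) s := by
  obtain ⟨C, hC⟩ := (isCompact_Icc.prod isCompact_Icc).exists_bound_of_continuousOn hf'
  have hIoc : Ι a b ⊆ Icc a b := by rw [uIoc_of_le hab]; exact Ioc_subset_Icc_self
  refine (hasDerivAt_integral_of_dominated_loc_of_deriv_le (F := fun s x => f x s)
    (F' := fun s x => f' x s) (bound := fun _ => C) (Ioo_mem_nhds hs.1 hs.2) ?_
    ((hf s hs).intervalIntegrable_of_Icc hab)
    (((hf'.uncurry_right s (Ioo_subset_Icc_self hs)).mono hIoc).aestronglyMeasurable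
      measurableSet_uIoc) ?_ intervalIntegrable_const ?_).2
  · filter_upwards [Ioo_mem_nhds hs.1 hs.2] with s' hs'
    exact ((hf s' hs').mono hIoc).aestronglyMeasurable measurableSet_uIoc
  · exact ae_of_all _ fun x hx s' hs' => hC (x, s') ⟨hIoc hx, Ioo_subset_Icc_self hs'⟩
  · exact ae_of_all _ fun x hx s' hs' => hderiv x (hIoc hx) s' hs'

theorem hasDerivAt_diag_of_symm {N K : ℝ → ℝ → ℝ} {t : ℝ}
    (hN : ∀ᶠ p in 𝓝 (t, t), HasDerivAt (N · p.2) (K p.1 p.2) p.1)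
    (hsymm : ∀ᶠ p in 𝓝 (t, t), N p.1 p.2 = N p.2 p.1)
    (hK : ContinuousAt (fun p : ℝ × ℝ => K p.1 p.2) (t, t)) :
    HasDerivAt (fun s => N s s) (2 * K t t) t := by
  have hN₂ : ∀ᶠ p in 𝓝 (t, t), HasDerivAt (N p.1 ·) (K p.2 p.1) p.2 := by
    have hswap : ∀ᶠ p : ℝ × ℝ in 𝓝 (t, t), HasDerivAt (N · p.1) (K p.2 p.1) p.2 :=
      (continuous_swap.tendsto (t, t)).eventually hN
    filter_upwards [hswap, hsymm.eventually_nhds] with p hp hp'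
    refine hp.congr_of_eventuallyEq ?_
    have : Tendsto (fun w => (p.1, w)) (𝓝 p.2) (𝓝 p) :=
      (Continuous.prodMk_right p.1).tendsto' _ _ rfl
    filter_upwards [this.eventually hp'] with w hw using hw
  have hKswap : ContinuousAt ((fun p : ℝ × ℝ => K p.1 p.2) ∘ Prod.swap) (t, t) :=
    ContinuousAt.comp (f := Prod.swap) (x := (t, t)) hK continuous_swap.continuousAt
  have hstrict := hasStrictFDerivAt_uncurry_coprod (f := N)
    (f₁ := fun s v => (1 : ℝ →L[ℝ] ℝ).smulRight (K s v))
    (f₂ := fun s v => (1 : ℝ →L[ℝ] ℝ).smulRight (K v s))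
    (hN.mono fun p hp => hp.hasFDerivAt) (hN₂.mono fun p hp => hp.hasFDerivAt)
    ((ContinuousLinearMap.smulRightL ℝ ℝ ℝ 1).continuous.continuousAt.comp hK)
    ((ContinuousLinearMap.smulRightL ℝ ℝ ℝ 1).continuous.continuousAt.comp hKswap)
  exact (hstrict.hasFDerivAt.comp_hasDerivAt (f := fun s => (s, s)) t
    ((hasDerivAt_id t).prodMk (hasDerivAt_id t))).congr_deriv
      (by simp [Function.HasUncurry.uncurry, two_mul])

theorem integral_mul_deriv_eq_neg_deriv_mul_of_eq_zero {u u' v v' : ℝ → ℝ} {a b : ℝ}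
    (hab : a ≤ b)
    (hu : ∀ x ∈ Icc a b, HasDerivWithinAt u (u' x) (Icc a b) x)
    (hv : ∀ x ∈ Icc a b, HasDerivWithinAt v (v' x) (Icc a b) x)
    (hu' : ContinuousOn u' (Icc a b)) (hv' : ContinuousOn v' (Icc a b))
    (ha : v a = 0) (hb : v b = 0) :
    ∫ x in a..b, u x * v' x = -∫ x in a..b, u' x * v x := by
  rw [← uIcc_of_le hab] at hu hv hu' hv'
  rw [integral_mul_deriv_eq_deriv_mul_of_hasDerivWithinAt hu hv hu'.intervalIntegrable
    hv'.intervalIntegrable, ha, hb]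
  ring

theorem two_mul_integral_mul_le {u v : ℝ → ℝ} {a b : ℝ} (hab : a ≤ b)
    (hu : ContinuousOn u (Icc a b)) (hv : ContinuousOn v (Icc a b)) :
    2 * ∫ x in a..b, u x * v x ≤ (∫ x in a..b, u x ^ 2) + ∫ x in a..b, v x ^ 2 := by
  rw [← intervalIntegral.integral_const_mul,
    ← integral_add (f := fun x => u x ^ 2) (g := fun x => v x ^ 2)
      ((hu.pow 2).intervalIntegrable_of_Icc hab) ((hv.pow 2).intervalIntegrable_of_Icc hab)]
  exact integral_mono_on hab (((hu.mul hv).const_smul (2 : ℝ)).intervalIntegrable_of_Icc hab)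
    (((hu.pow 2).add (hv.pow 2)).intervalIntegrable_of_Icc hab)
    fun x _ => by nlinarith [sq_nonneg (u x - v x)]

theorem le_mul_exp_of_le_add_integral {g E : ℝ → ℝ} {G T : ℝ} (hT : 0 ≤ T)
    (hg : ContinuousOn g (Icc 0 T)) (hE : ∀ u ∈ Icc 0 T, 0 ≤ E u)
    (h : ∀ u ∈ Icc 0 T, g u + E u ≤ G + ∫ s in 0..u, g s) :
    ∀ u ∈ Icc 0 T, g u + E u ≤ G * Real.exp u := by
  have hderiv : ∀ u ∈ Ico 0 T,
      HasDerivWithinAt (fun u => ∫ s in 0..u, g s) (g u) (Ici u) u := by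
    intro u hu
    have hIoo : Ioo u T ⊆ Icc 0 T := Ioo_subset_Icc_self.trans (Icc_subset_Icc_left hu.1)
    refine integral_hasDerivWithinAt_right (t := Ioi u)
      ((hg.mono (Icc_subset_Icc_right hu.2.le)).intervalIntegrable_of_Icc hu.1) ?_ ?_
    · rw [← nhdsWithin_Ioo_eq_nhdsGT hu.2]
      exact (hg.mono hIoo).stronglyMeasurableAtFilter_nhdsWithin measurableSet_Ioo u
    · exact (continuousWithinAt_Ioo_iff_Ioi hu.2).1
        ((hg u (Ico_subset_Icc_self hu)).mono hIoo)
  have hgron := le_gronwallBound_of_liminf_deriv_right_le (a := 0) (b := T) (δ := 0) (K := 1)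
    (ε := G)
    (continuousOn_primitive_of_continuousOn hT hg)
    (fun u hu r hr => (hderiv u hu).liminf_right_slope_le hr) (by rw [integral_same])
    (fun u hu => by linarith [h u (Ico_subset_Icc_self hu), hE u (Ico_subset_Icc_self hu)])
  intro u hu
  have hbound := hgron u hu
  rw [gronwallBound_of_K_ne_0 one_ne_zero] at hbound
  simp only [sub_zero, one_mul, div_one, zero_mul, zero_add] at hbound
  linarith [h u hu]

theorem ae_ae_of_ae_restrict_prod {α β : Type*} [MeasureSpace α] [MeasureSpace β]
    [SFinite (volume : Measure α)] [SFinite (volume : Measure β)] {s : Set α} {t : Set β}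
    {p : α × β → Prop}
    (h : ∀ᵐ q ∂volume.restrict (s ×ˢ t), p q) :
    ∀ᵐ y ∂volume.restrict t, ∀ᵐ x ∂volume.restrict s, p (x, y) := by
  rw [Measure.volume_eq_prod, ← Measure.prod_restrict] at h
  exact Measure.ae_ae_of_ae_prod (Measure.measurePreserving_swap.quasiMeasurePreserving.ae h)

section Slice

variable {a b a0 : ℝ} {α pt px pxx f fx : ℝ → ℝ}

theorem intervalIntegrable_mul_sq (hab : a ≤ b) (hα : Measurable α)
    (hbd : ∀ᵐ x ∂volume.restrict (Ioo a b), 0 ≤ α x ∧ α x ≤ a0)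
    (hpxx : ContinuousOn pxx (Icc a b)) :
    IntervalIntegrable (fun x => α x * pxx x ^ 2) volume a b := by
  obtain ⟨C, hC⟩ := isCompact_Icc.exists_bound_of_continuousOn hpxx
  rw [intervalIntegrable_iff_integrableOn_Ioo_of_le hab]
  refine Integrable.mono' (g := fun _ => a0 * C ^ 2) (integrableOn_const measure_Ioo_lt_top.ne)
    (hα.aemeasurable.mul (((hpxx.mono Ioo_subset_Icc_self).aemeasurable
      measurableSet_Ioo).pow_const 2)).aestronglyMeasurable ?_
  filter_upwards [hbd, ae_restrict_mem measurableSet_Ioo] with x hx hxI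
  rw [Real.norm_eq_abs, abs_mul, abs_of_nonneg hx.1, abs_pow]
  have := hC x (Ioo_subset_Icc_self hxI)
  rw [Real.norm_eq_abs] at this
  exact mul_le_mul hx.2 (pow_le_pow_left₀ (abs_nonneg _) this 2) (by positivity)
    (hx.1.trans hx.2)

theorem integral_sq_le_of_ae_eq (hab : a ≤ b)
    (hpde : ∀ᵐ x ∂volume.restrict (Ioo a b), pt x = α x * pxx x + f x)
    (hbd : ∀ᵐ x ∂volume.restrict (Ioo a b), 0 ≤ α x ∧ α x ≤ a0)
    (hpt : ContinuousOn pt (Icc a b)) (hf : ContinuousOn f (Icc a b))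
    (hint : IntervalIntegrable (fun x => α x * pxx x ^ 2) volume a b) :
    ∫ x in a..b, pt x ^ 2
      ≤ 2 * a0 * (∫ x in a..b, α x * pxx x ^ 2) + 2 * ∫ x in a..b, f x ^ 2 := by
  have hf2 : IntervalIntegrable (fun x => f x ^ 2) volume a b :=
    (hf.pow 2).intervalIntegrable_of_Icc hab
  rw [← intervalIntegral.integral_const_mul, ← intervalIntegral.integral_const_mul,
    ← integral_add (hint.const_mul _) (hf2.const_mul _)]
  refine integral_mono_ae_restrict hab ((hpt.pow 2).intervalIntegrable_of_Icc hab)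
    ((hint.const_mul _).add (hf2.const_mul _)) ?_
  rw [← Measure.restrict_congr_set Ioo_ae_eq_Icc]
  filter_upwards [hpde, hbd] with x hx hαx
  rw [hx]
  nlinarith [sq_nonneg (α x * pxx x - f x),
    mul_nonneg (mul_nonneg hαx.1 (sub_nonneg.2 hαx.2)) (sq_nonneg (pxx x))]

theorem integral_mul_sq_eq_of_ae_eq (hab : a ≤ b)
    (hpde : ∀ᵐ x ∂volume.restrict (Ioo a b), pt x = α x * pxx x + f x)
    (hint : IntervalIntegrable (fun x => α x * pxx x ^ 2) volume a b)
    (hpx : ∀ x ∈ Icc a b, HasDerivWithinAt px (pxx x) (Icc a b) x)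
    (hpxx : ContinuousOn pxx (Icc a b))
    (hf : ∀ x ∈ Icc a b, HasDerivWithinAt f (fx x) (Icc a b) x)
    (hfx : ContinuousOn fx (Icc a b)) (ha : px a = 0) (hb : px b = 0) :
    ∫ x in a..b, α x * pxx x ^ 2
      = (∫ x in a..b, pt x * pxx x) + ∫ x in a..b, fx x * px x := by
  have hfc : ContinuousOn f (Icc a b) := fun x hx => (hf x hx).continuousWithinAt
  have hsplit : ∫ x in a..b, pt x * pxx x
      = (∫ x in a..b, α x * pxx x ^ 2) + ∫ x in a..b, f x * pxx x := by
    rw [← integral_add (g := fun x => f x * pxx x) hint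
      ((hfc.mul hpxx).intervalIntegrable_of_Icc hab)]
    refine integral_congr_ae_restrict ?_
    rw [uIoc_of_le hab, ← Measure.restrict_congr_set Ioo_ae_eq_Ioc]
    filter_upwards [hpde] with x hx
    rw [hx]
    ring
  rw [hsplit, integral_mul_deriv_eq_neg_deriv_mul_of_eq_zero hab hf hpx hfx hpxx ha hb]
  ring

theorem energy_slice_estimates (hab : a ≤ b) (hα : Measurable α)
    (hpde : ∀ᵐ x ∂volume.restrict (Ioo a b), pt x = α x * pxx x + f x)
    (hbd : ∀ᵐ x ∂volume.restrict (Ioo a b), 0 ≤ α x ∧ α x ≤ a0)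
    (hpt : ContinuousOn pt (Icc a b))
    (hpx : ∀ x ∈ Icc a b, HasDerivWithinAt px (pxx x) (Icc a b) x)
    (hpxx : ContinuousOn pxx (Icc a b))
    (hf : ∀ x ∈ Icc a b, HasDerivWithinAt f (fx x) (Icc a b) x)
    (hfx : ContinuousOn fx (Icc a b)) (ha : px a = 0) (hb : px b = 0) :
    ∫ x in a..b, (pt x ^ 2 + α x * pxx x ^ 2)
        = (∫ x in a..b, pt x ^ 2) + ((∫ x in a..b, pt x * pxx x) + ∫ x in a..b, fx x * px x)
      ∧ 0 ≤ (∫ x in a..b, pt x * pxx x) + ∫ x in a..b, fx x * px x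
      ∧ ∫ x in a..b, pt x ^ 2
        ≤ 2 * a0 * ((∫ x in a..b, pt x * pxx x) + ∫ x in a..b, fx x * px x)
          + 2 * ∫ x in a..b, f x ^ 2 := by
  have hint := intervalIntegrable_mul_sq hab hα hbd hpxx
  rw [← integral_mul_sq_eq_of_ae_eq hab hpde hint hpx hpxx hf hfx ha hb]
  refine ⟨integral_add ((hpt.pow 2).intervalIntegrable_of_Icc hab) hint,
    integral_nonneg_of_ae_restrict hab ?_,
    integral_sq_le_of_ae_eq hab hpde hbd hpt (fun x hx => (hf x hx).continuousWithinAt) hint⟩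
  rw [← Measure.restrict_congr_set Ioo_ae_eq_Icc]
  exact hbd.mono fun x hx => mul_nonneg hx.1 (sq_nonneg _)

end Slice

theorem heat_energy_identity {ℓ T : ℝ} (hℓ : 0 < ℓ) {ψ ψt ψx ψxx : ℝ → ℝ → ℝ}
    (hψt : ∀ x ∈ Icc 0 ℓ, ∀ t ∈ Icc 0 T,
      HasDerivWithinAt (fun s => ψ x s) (ψt x t) (Icc 0 T) t)
    (hψtc : ContinuousOn (fun q : ℝ × ℝ => ψt q.1 q.2) (Icc 0 ℓ ×ˢ Icc 0 T))
    (hψx : ∀ x ∈ Icc 0 ℓ, ∀ t ∈ Icc 0 T,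
      HasDerivWithinAt (fun y => ψ y t) (ψx x t) (Icc 0 ℓ) x)
    (hψxc : ContinuousOn (fun q : ℝ × ℝ => ψx q.1 q.2) (Icc 0 ℓ ×ˢ Icc 0 T))
    (hψxx : ∀ x ∈ Icc 0 ℓ, ∀ t ∈ Icc 0 T,
      HasDerivWithinAt (fun y => ψx y t) (ψxx x t) (Icc 0 ℓ) x)
    (hψxxc : ContinuousOn (fun q : ℝ × ℝ => ψxx q.1 q.2) (Icc 0 ℓ ×ˢ Icc 0 T))
    (hinit : ∀ x ∈ Icc 0 ℓ, ψ x 0 = 0)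
    (hbdry : ∀ t ∈ Icc 0 T, ψx 0 t = 0 ∧ ψx ℓ t = 0) :
    ∀ u ∈ Icc 0 T,
      ∫ x in 0..ℓ, ψx x u ^ 2 = -2 * ∫ t in 0..u, ∫ x in 0..ℓ, ψt x t * ψxx x t := by
  intro u hu
  have hT : 0 ≤ T := hu.1.trans hu.2
  set N := fun s v => ∫ x in 0..ℓ, ψ x s * ψxx x v
  set K := fun s v => ∫ x in 0..ℓ, ψt x s * ψxx x v
  have hNM : ∀ s ∈ Icc 0 T, ∀ v ∈ Icc 0 T, N s v = -∫ x in 0..ℓ, ψx x s * ψx x v :=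
    fun s hs v hv => integral_mul_deriv_eq_neg_deriv_mul_of_eq_zero hℓ.le
      (fun x hx => hψx x hx s hs) (fun x hx => hψxx x hx v hv) (hψxc.uncurry_right s hs)
      (hψxxc.uncurry_right v hv) (hbdry v hv).1 (hbdry v hv).2
  have hN : ∀ v ∈ Icc 0 T, ∀ s ∈ Ioo 0 T, HasDerivAt (N · v) (K s v) s := fun v hv s hs =>
    hasDerivAt_intervalIntegral_of_continuousOn hℓ.le
      (fun s' hs' => ContinuousOn.mul
        (fun x hx => (hψx x hx s' (Ioo_subset_Icc_self hs')).continuousWithinAt)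
        (hψxxc.uncurry_right v hv))
      (hψtc.mul (hψxxc.comp (continuous_fst.prodMk continuous_const).continuousOn
        fun q hq => ⟨hq.1, hv⟩))
      (fun x hx s' hs' => ((hψt x hx s' (Ioo_subset_Icc_self hs')).hasDerivAt
        (Icc_mem_nhds hs'.1 hs'.2)).mul_const _) hs
  have hK : ContinuousOn (fun p : ℝ × ℝ => K p.1 p.2) (Icc 0 T ×ˢ Icc 0 T) :=
    continuousOn_intervalIntegral_of_continuousOn_prod (isCompact_Icc.prod isCompact_Icc) hℓ.le
      ((hψtc.comp (continuous_fst.prodMk continuous_snd.fst).continuousOn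
        fun q hq => ⟨hq.1, hq.2.1⟩).mul
      (hψxxc.comp (continuous_fst.prodMk continuous_snd.snd).continuousOn
        fun q hq => ⟨hq.1, hq.2.2⟩))
  have hg' : ∀ t ∈ Ioo 0 T,
      HasDerivAt (fun t => ∫ x in 0..ℓ, ψx x t ^ 2) (-2 * K t t) t := by
    intro t ht
    have hsq : Ioo 0 T ×ˢ Ioo 0 T ∈ 𝓝 (t, t) :=
      prod_mem_nhds (Ioo_mem_nhds ht.1 ht.2) (Ioo_mem_nhds ht.1 ht.2)
    have hdiag := hasDerivAt_diag_of_symm (N := N) (K := K)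
      (by filter_upwards [hsq] with p hp using hN p.2 (Ioo_subset_Icc_self hp.2) p.1 hp.1)
      (by
        filter_upwards [hsq] with p hp
        rw [hNM _ (Ioo_subset_Icc_self hp.1) _ (Ioo_subset_Icc_self hp.2),
          hNM _ (Ioo_subset_Icc_self hp.2) _ (Ioo_subset_Icc_self hp.1)]
        simp only [mul_comm])
      (hK.continuousAt (prod_mem_nhds (Icc_mem_nhds ht.1 ht.2) (Icc_mem_nhds ht.1 ht.2)))
    refine (hdiag.neg.congr_of_eventuallyEq ?_).congr_deriv (by ring)
    filter_upwards [Icc_mem_nhds ht.1 ht.2] with s hs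
    simp only [Pi.neg_apply, hNM s hs s hs, neg_neg, sq]
  have hψx0 : ∀ x ∈ Icc 0 ℓ, ψx x 0 = 0 := fun x hx =>
    (uniqueDiffOn_Icc hℓ x hx).eq_deriv _ (hψx x hx 0 ⟨le_rfl, hT⟩)
      ((hasDerivWithinAt_const x _ 0).congr (fun y hy => hinit y hy) (hinit x hx))
  have hg0 : ∫ x in 0..ℓ, ψx x 0 ^ 2 = 0 := by
    have : EqOn (fun x => ψx x 0 ^ 2) 0 (uIcc 0 ℓ) := fun x hx => by
      rw [uIcc_of_le hℓ.le] at hx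
      simp [hψx0 x hx]
    simp only [integral_congr this, Pi.zero_apply, intervalIntegral.integral_zero]
  have hKdiag : ContinuousOn (fun t => K t t) (Icc 0 T) :=
    hK.comp (continuousOn_id.prodMk continuousOn_id) fun t ht => ⟨ht, ht⟩
  have hftc := integral_eq_sub_of_hasDerivAt_of_le hu.1
    ((continuousOn_intervalIntegral_of_continuousOn_prod isCompact_Icc hℓ.le
      (hψxc.pow 2)).mono (Icc_subset_Icc_right hu.2))
    (fun t ht => hg' t ⟨ht.1, ht.2.trans_le hu.2⟩)
    (((hKdiag.mono (Icc_subset_Icc_right hu.2)).const_smul (-2 : ℝ)).intervalIntegrable_of_Icc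
      hu.1)
  rw [intervalIntegral.integral_const_mul, hg0, sub_zero] at hftc
  exact hftc.symm

-- In the application `g, k, j, gf, p, pf` are the `x`-integrals of
-- `ψ_x², ψ_t ψ_xx, F_x ψ_x, F_x², ψ_t², F²` at time `t`, `k + j = ∫ a ψ_xx²`, and `e` is the
-- `x`-integral of `ψ_t² + a ψ_xx²`.
theorem heat_energy_gronwall {T : ℝ} (hT : 0 ≤ T) {g k j gf : ℝ → ℝ}
    (hk : ContinuousOn k (Icc 0 T)) (hj : ContinuousOn j (Icc 0 T))
    (hgf : ContinuousOn gf (Icc 0 T))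
    (henergy : ∀ u ∈ Icc 0 T, g u = -2 * ∫ t in 0..u, k t)
    (hgf0 : ∀ t ∈ Icc 0 T, 0 ≤ gf t) (hyoung : ∀ t ∈ Icc 0 T, 2 * j t ≤ gf t + g t)
    (hb : ∀ᵐ t ∂volume.restrict (Ioo 0 T), 0 ≤ k t + j t) :
    ∀ u ∈ Icc 0 T,
      g u + 2 * ∫ t in 0..u, (k t + j t) ≤ (∫ t in 0..T, gf t) * Real.exp u := by
  have hint : ∀ {f : ℝ → ℝ}, ContinuousOn f (Icc 0 T) → ∀ u ∈ Icc 0 T,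
      IntervalIntegrable f volume 0 u := fun hf u hu =>
    (hf.mono (Icc_subset_Icc_right hu.2)).intervalIntegrable_of_Icc (μ := volume) hu.1
  have hg : ContinuousOn g (Icc 0 T) :=
    ((continuousOn_primitive_of_continuousOn hT hk).const_smul (-2 : ℝ)).congr
      fun u hu => henergy u hu
  refine le_mul_exp_of_le_add_integral hT hg (fun u hu => ?_) (fun u hu => ?_)
  · refine mul_nonneg zero_le_two (integral_nonneg_of_ae_restrict hu.1 ?_)
    refine ae_restrict_of_ae_restrict_of_subset (Icc_subset_Icc_right hu.2) ?_
    rwa [← Measure.restrict_congr_set Ioo_ae_eq_Icc]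
  · have hj' : 2 * ∫ t in 0..u, j t ≤ (∫ t in 0..u, gf t) + ∫ t in 0..u, g t := by
      rw [← intervalIntegral.integral_const_mul, ← integral_add (hint hgf u hu) (hint hg u hu)]
      exact integral_mono_on hu.1 ((hint hj u hu).const_mul 2)
        ((hint hgf u hu).add (hint hg u hu)) fun t ht => hyoung t ⟨ht.1, ht.2.trans hu.2⟩
    have hgf' : ∫ t in 0..u, gf t ≤ ∫ t in 0..T, gf t :=
      integral_mono_interval le_rfl hu.1 hu.2
        ((ae_restrict_mem measurableSet_Ioc).mono fun t ht => hgf0 t (Ioc_subset_Icc_self ht))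
        (hint hgf T ⟨hT, le_rfl⟩)
    rw [henergy u hu, integral_add (hint hk u hu) (hint hj u hu)]
    linarith

theorem heat_energy_bound {T a0 : ℝ} (hT : 0 ≤ T) (ha0 : 0 ≤ a0)
    {e g k j p pf gf : ℝ → ℝ}
    (hk : ContinuousOn k (Icc 0 T)) (hj : ContinuousOn j (Icc 0 T))
    (hp : ContinuousOn p (Icc 0 T)) (hpf : ContinuousOn pf (Icc 0 T))
    (hgf : ContinuousOn gf (Icc 0 T))
    (henergy : ∀ u ∈ Icc 0 T, g u = -2 * ∫ t in 0..u, k t)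
    (hg0 : ∀ t ∈ Icc 0 T, 0 ≤ g t) (hgf0 : ∀ t ∈ Icc 0 T, 0 ≤ gf t)
    (hyoung : ∀ t ∈ Icc 0 T, 2 * j t ≤ gf t + g t)
    (hslice : ∀ᵐ t ∂volume.restrict (Ioo 0 T), e t = p t + (k t + j t) ∧ 0 ≤ k t + j t ∧
      p t ≤ 2 * a0 * (k t + j t) + 2 * pf t) :
    ∀ t0 ∈ Icc 0 T, (∫ t in 0..T, e t) + g t0
      ≤ 2 * (∫ t in 0..T, pf t) + (2 * a0 + 2) * Real.exp T * ∫ t in 0..T, gf t := by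
  intro t0 ht0
  have hgron := heat_energy_gronwall hT hk hj hgf henergy hgf0 hyoung
    (hslice.mono fun t ht => ht.2.1)
  have hT' : T ∈ Icc 0 T := ⟨hT, le_rfl⟩
  have hkj : IntervalIntegrable (fun t => k t + j t) volume 0 T :=
    (hk.add hj).intervalIntegrable_of_Icc hT
  have hpi : IntervalIntegrable p volume 0 T := hp.intervalIntegrable_of_Icc hT
  have hpfi : IntervalIntegrable pf volume 0 T := hpf.intervalIntegrable_of_Icc hT
  have hIcc : volume.restrict (Icc 0 T) = volume.restrict (Ioo 0 T) :=
    (Measure.restrict_congr_set Ioo_ae_eq_Icc).symm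
  have he : ∫ t in 0..T, e t = (∫ t in 0..T, p t) + ∫ t in 0..T, (k t + j t) := by
    rw [← integral_add hpi hkj]
    refine integral_congr_ae_restrict ?_
    rw [uIoc_of_le hT, ← Measure.restrict_congr_set Ioo_ae_eq_Ioc]
    exact hslice.mono fun t ht => ht.1
  have hpB : ∫ t in 0..T, p t
      ≤ 2 * a0 * (∫ t in 0..T, (k t + j t)) + 2 * ∫ t in 0..T, pf t := by
    rw [← intervalIntegral.integral_const_mul, ← intervalIntegral.integral_const_mul,
      ← integral_add (hkj.const_mul _) (hpfi.const_mul _)]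
    refine integral_mono_ae_restrict hT hpi ((hkj.const_mul _).add (hpfi.const_mul _)) ?_
    rw [hIcc]
    exact hslice.mono fun t ht => ht.2.2
  have hB0 : ∀ u ∈ Icc 0 T, 0 ≤ ∫ t in 0..u, (k t + j t) := fun u hu =>
    integral_nonneg_of_ae_restrict hu.1 <| ae_restrict_of_ae_restrict_of_subset
      (Icc_subset_Icc_right hu.2) (by rw [hIcc]; exact hslice.mono fun t ht => ht.2.1)
  have hG : 0 ≤ ∫ t in 0..T, gf t := integral_nonneg hT hgf0
  have hBT := hgron T hT'
  have hgt0 : g t0 ≤ (∫ t in 0..T, gf t) * Real.exp T := by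
    have := hgron t0 ht0
    have := mul_le_mul_of_nonneg_left (Real.exp_le_exp.2 ht0.2) hG
    linarith [hB0 t0 ht0]
  rw [he]
  nlinarith [hg0 T hT', mul_le_mul_of_nonneg_left hBT (by linarith : (0 : ℝ) ≤ 2 * a0 + 1),
    mul_nonneg ha0 (mul_nonneg hG (Real.exp_pos T).le), hB0 T hT']

theorem heat_equation_energy_estimate_general
    (ℓ T a0 : ℝ) (hℓ : 0 < ℓ) (hT : 0 < T) (ha0 : 0 < a0)
    (a : ℝ × ℝ → ℝ) (ha : Measurable a)
    (hab : ∀ᵐ q ∂(volume.restrict (Set.Ioo (0 : ℝ) ℓ ×ˢ Set.Ioo (0 : ℝ) T)),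
      0 ≤ a q ∧ a q ≤ a0)
    (F Fx : ℝ → ℝ → ℝ)
    (hF : ContinuousOn (fun q : ℝ × ℝ => F q.1 q.2) (Set.Icc 0 ℓ ×ˢ Set.Icc 0 T))
    (hFx : ∀ x ∈ Set.Icc (0 : ℝ) ℓ, ∀ t ∈ Set.Icc (0 : ℝ) T,
      HasDerivWithinAt (fun y => F y t) (Fx x t) (Set.Icc 0 ℓ) x)
    (hFxc : ContinuousOn (fun q : ℝ × ℝ => Fx q.1 q.2) (Set.Icc 0 ℓ ×ˢ Set.Icc 0 T))
    (ψ ψt ψx ψxx : ℝ → ℝ → ℝ)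
    (hψt : ∀ x ∈ Set.Icc (0 : ℝ) ℓ, ∀ t ∈ Set.Icc (0 : ℝ) T,
      HasDerivWithinAt (fun s => ψ x s) (ψt x t) (Set.Icc 0 T) t)
    (hψtc : ContinuousOn (fun q : ℝ × ℝ => ψt q.1 q.2) (Set.Icc 0 ℓ ×ˢ Set.Icc 0 T))
    (hψx : ∀ x ∈ Set.Icc (0 : ℝ) ℓ, ∀ t ∈ Set.Icc (0 : ℝ) T,
      HasDerivWithinAt (fun y => ψ y t) (ψx x t) (Set.Icc 0 ℓ) x)
    (hψxc : ContinuousOn (fun q : ℝ × ℝ => ψx q.1 q.2) (Set.Icc 0 ℓ ×ˢ Set.Icc 0 T))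
    (hψxx : ∀ x ∈ Set.Icc (0 : ℝ) ℓ, ∀ t ∈ Set.Icc (0 : ℝ) T,
      HasDerivWithinAt (fun y => ψx y t) (ψxx x t) (Set.Icc 0 ℓ) x)
    (hψxxc : ContinuousOn (fun q : ℝ × ℝ => ψxx q.1 q.2) (Set.Icc 0 ℓ ×ˢ Set.Icc 0 T))
    (hinit : ∀ x ∈ Set.Icc (0 : ℝ) ℓ, ψ x 0 = 0)
    (hbdry : ∀ t ∈ Set.Icc (0 : ℝ) T, ψx 0 t = 0 ∧ ψx ℓ t = 0)
    (hpde : ∀ᵐ q ∂(volume.restrict (Set.Ioo (0 : ℝ) ℓ ×ˢ Set.Ioo (0 : ℝ) T)),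
      ψt q.1 q.2 = a q * ψxx q.1 q.2 + F q.1 q.2) :
    ∀ t0 ∈ Set.Icc (0 : ℝ) T,
      (∫ t in (0 : ℝ)..T, ∫ x in (0 : ℝ)..ℓ,
          ((ψt x t) ^ 2 + a (x, t) * (ψxx x t) ^ 2))
        + (∫ x in (0 : ℝ)..ℓ, (ψx x t0) ^ 2)
      ≤ 2 * (∫ t in (0 : ℝ)..T, ∫ x in (0 : ℝ)..ℓ, (F x t) ^ 2)
        + (2 * a0 + 2) * Real.exp T *
            (∫ t in (0 : ℝ)..T, ∫ x in (0 : ℝ)..ℓ, (Fx x t) ^ 2) := by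
  have hcont : ∀ {f : ℝ → ℝ → ℝ},
      ContinuousOn (fun q : ℝ × ℝ => f q.1 q.2) (Icc 0 ℓ ×ˢ Icc 0 T) →
      ContinuousOn (fun t => ∫ x in 0..ℓ, f x t) (Icc 0 T) :=
    continuousOn_intervalIntegral_of_continuousOn_prod isCompact_Icc hℓ.le
  refine heat_energy_bound hT.le ha0.le (hcont (hψtc.mul hψxxc)) (hcont (hFxc.mul hψxc))
    (hcont (f := fun x t => ψt x t ^ 2) (hψtc.pow 2))
    (hcont (f := fun x t => F x t ^ 2) (hF.pow 2))
    (hcont (f := fun x t => Fx x t ^ 2) (hFxc.pow 2))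
    (heat_energy_identity hℓ hψt hψtc hψx hψxc hψxx hψxxc hinit hbdry)
    (fun _ _ => integral_nonneg hℓ.le fun _ _ => sq_nonneg _)
    (fun _ _ => integral_nonneg hℓ.le fun _ _ => sq_nonneg _)
    (fun t ht => two_mul_integral_mul_le hℓ.le (hFxc.uncurry_right t ht)
      (hψxc.uncurry_right t ht)) ?_
  filter_upwards [ae_ae_of_ae_restrict_prod hpde, ae_ae_of_ae_restrict_prod hab,
    ae_restrict_mem measurableSet_Ioo] with t hpde_t hbd_t ht
  have htI : t ∈ Icc 0 T := Ioo_subset_Icc_self ht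
  exact energy_slice_estimates hℓ.le (ha.comp measurable_prodMk_right) hpde_t hbd_t
    (hψtc.uncurry_right t htI) (fun x hx => hψxx x hx t htI) (hψxxc.uncurry_right t htI)
    (fun x hx => hFx x hx t htI) (hFxc.uncurry_right t htI) (hbdry t htI).1 (hbdry t htI).2

/-- A priori energy estimate for the Neumann problem for the heat equation
`ψ_t = a ψ_xx + F` with bounded measurable diffusion coefficient `a`, homogeneous Neumann
boundary conditions and zero initial data. The supremum over `t ∈ [0,T]` of
`∫_0^ℓ ψ_x(·,t)²` is expressed by quantifying over `t0 ∈ [0,T]`. -/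
theorem heat_equation_energy_estimate
    (ℓ T a0 : ℝ) (hℓ : 0 < ℓ) (hT : 0 < T) (ha0 : 0 < a0)
    (a : ℝ × ℝ → ℝ) (ha : Measurable a)
    (hab : ∀ᵐ q ∂(volume.restrict (Set.Ioo (0 : ℝ) ℓ ×ˢ Set.Ioo (0 : ℝ) T)),
      0 ≤ a q ∧ a q ≤ a0)
    (F Fx Ft : ℝ → ℝ → ℝ)
    (hF : ContinuousOn (fun q : ℝ × ℝ => F q.1 q.2) (Set.Icc 0 ℓ ×ˢ Set.Icc 0 T))
    (hFx : ∀ x ∈ Set.Icc (0 : ℝ) ℓ, ∀ t ∈ Set.Icc (0 : ℝ) T,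
      HasDerivWithinAt (fun y => F y t) (Fx x t) (Set.Icc 0 ℓ) x)
    (hFxc : ContinuousOn (fun q : ℝ × ℝ => Fx q.1 q.2) (Set.Icc 0 ℓ ×ˢ Set.Icc 0 T))
    (hFt : ∀ x ∈ Set.Icc (0 : ℝ) ℓ, ∀ t ∈ Set.Icc (0 : ℝ) T,
      HasDerivWithinAt (fun s => F x s) (Ft x t) (Set.Icc 0 T) t)
    (hFtc : ContinuousOn (fun q : ℝ × ℝ => Ft q.1 q.2) (Set.Icc 0 ℓ ×ˢ Set.Icc 0 T))
    (ψ ψt ψx ψxx : ℝ → ℝ → ℝ)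
    (hψ : ContinuousOn (fun q : ℝ × ℝ => ψ q.1 q.2) (Set.Icc 0 ℓ ×ˢ Set.Icc 0 T))
    (hψt : ∀ x ∈ Set.Icc (0 : ℝ) ℓ, ∀ t ∈ Set.Icc (0 : ℝ) T,
      HasDerivWithinAt (fun s => ψ x s) (ψt x t) (Set.Icc 0 T) t)
    (hψtc : ContinuousOn (fun q : ℝ × ℝ => ψt q.1 q.2) (Set.Icc 0 ℓ ×ˢ Set.Icc 0 T))
    (hψx : ∀ x ∈ Set.Icc (0 : ℝ) ℓ, ∀ t ∈ Set.Icc (0 : ℝ) T,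
      HasDerivWithinAt (fun y => ψ y t) (ψx x t) (Set.Icc 0 ℓ) x)
    (hψxc : ContinuousOn (fun q : ℝ × ℝ => ψx q.1 q.2) (Set.Icc 0 ℓ ×ˢ Set.Icc 0 T))
    (hψxx : ∀ x ∈ Set.Icc (0 : ℝ) ℓ, ∀ t ∈ Set.Icc (0 : ℝ) T,
      HasDerivWithinAt (fun y => ψx y t) (ψxx x t) (Set.Icc 0 ℓ) x)
    (hψxxc : ContinuousOn (fun q : ℝ × ℝ => ψxx q.1 q.2) (Set.Icc 0 ℓ ×ˢ Set.Icc 0 T))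
    (hinit : ∀ x ∈ Set.Icc (0 : ℝ) ℓ, ψ x 0 = 0)
    (hbdry : ∀ t ∈ Set.Icc (0 : ℝ) T, ψx 0 t = 0 ∧ ψx ℓ t = 0)
    (hpde : ∀ᵐ q ∂(volume.restrict (Set.Ioo (0 : ℝ) ℓ ×ˢ Set.Ioo (0 : ℝ) T)),
      ψt q.1 q.2 = a q * ψxx q.1 q.2 + F q.1 q.2) :
    ∀ t0 ∈ Set.Icc (0 : ℝ) T,
      (∫ t in (0 : ℝ)..T, ∫ x in (0 : ℝ)..ℓ,
          ((ψt x t) ^ 2 + a (x, t) * (ψxx x t) ^ 2))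
        + (∫ x in (0 : ℝ)..ℓ, (ψx x t0) ^ 2)
      ≤ 2 * (∫ t in (0 : ℝ)..T, ∫ x in (0 : ℝ)..ℓ, (F x t) ^ 2)
        + (2 * a0 + 2) * Real.exp T *
            (∫ t in (0 : ℝ)..T, ∫ x in (0 : ℝ)..ℓ, (Fx x t) ^ 2) :=
  heat_equation_energy_estimate_general ℓ T a0 hℓ hT ha0 a ha hab F Fx hF hFx hFxc ψ ψt ψx ψxx hψt
    hψtc hψx hψxc hψxx hψxxc hinit hbdry hpde
end

section
/- Let H be a real Hilbert space, let J : H → ℝ be nonnegative and sequentially weakly continuous (i.e., J(g_l) → J(g) whenever g_l → g weakly in H), and let R > 0. For s ∈ (−R, ∞) define J_*(s) = inf { J(g) : g ∈ H, ‖g‖ ≤ R + s } and write J_* = J_*(0). Then lim_{ε→0⁺} J_*(ε) = J_* and lim_{ε→0⁺} J_*(−ε) = J_*. -/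
/-!
A weakly sequentially continuous functional `J` attains its infimum `m r` on every closed ball
`‖g‖ ≤ r`, since bounded sequences have weakly convergent subsequences, and `m` is
antitone in `r`. Continuity from the left at `R > 0` comes from shrinking a minimizer on the
ball of radius `R` by the factor `r / R`. Continuity from the right: minimizers on the balls
of radius `R + 1/(l+1)` have a weak cluster point, which lies in the ball of radius `R`
because the norm is weakly lower semicontinuous, and the values of `J` converge along it.
-/

open Filter Topology Metric

namespace InnerProductSpace

variable {H : Type*} [NormedAddCommGroup H] [InnerProductSpace ℝ H]

def WeakTendsto (u : ℕ → H) (g : H) : Prop :=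
  ∀ y : H, Tendsto (fun l => inner ℝ (u l) y) atTop (𝓝 (inner ℝ g y))

def SeqWeaklyContinuous {α : Type*} [TopologicalSpace α] (J : H → α) : Prop :=
  ∀ (u : ℕ → H) (g : H), WeakTendsto u g → Tendsto (J ∘ u) atTop (𝓝 (J g))

theorem weakTendsto_of_tendsto {u : ℕ → H} {g : H} (hu : Tendsto u atTop (𝓝 g)) :
    WeakTendsto u g :=
  fun _ => hu.inner tendsto_const_nhds

theorem norm_le_of_weakTendsto {u : ℕ → H} {g : H} {r : ℕ → ℝ} {r₀ : ℝ}
    (hu : WeakTendsto u g) (hr : Tendsto r atTop (𝓝 r₀)) (hur : ∀ l, ‖u l‖ ≤ r l) :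
    ‖g‖ ≤ r₀ := by
  have hr₀ : 0 ≤ r₀ := ge_of_tendsto' hr fun l => (norm_nonneg _).trans (hur l)
  have hsq : ‖g‖ * ‖g‖ ≤ r₀ * ‖g‖ := by
    rw [← real_inner_self_eq_norm_mul_norm]
    refine le_of_tendsto_of_tendsto' (hu g) (hr.mul_const ‖g‖) fun l => ?_
    exact (real_inner_le_norm _ _).trans (mul_le_mul_of_nonneg_right (hur l) (norm_nonneg g))
  nlinarith [norm_nonneg g]

/-- Sequential Banach–Alaoglu in the separable closed span `K` of the sequence, transported to
`K` by the Riesz isomorphism; projecting test vectors onto `K` extends the convergence to all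
of `H`. -/
theorem exists_strictMono_weakTendsto [CompleteSpace H] (u : ℕ → H) {C : ℝ}
    (hu : ∀ l, ‖u l‖ ≤ C) : ∃ g : H, ∃ φ : ℕ → ℕ, StrictMono φ ∧ WeakTendsto (u ∘ φ) g := by
  set K : Submodule ℝ H := (Submodule.span ℝ (Set.range u)).topologicalClosure
  have : TopologicalSpace.SeparableSpace K := by
    have := ((Set.countable_range u).isSeparable.span (R := ℝ)).closure
    rw [← Submodule.topologicalClosure_coe] at this
    exact this.separableSpace
  have hmem : ∀ l, u l ∈ K := fun l =>
    (Submodule.span ℝ _).le_topologicalClosure (Submodule.subset_span ⟨l, rfl⟩)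
  let v : ℕ → WeakDual ℝ K := fun l => toDual ℝ K ⟨u l, hmem l⟩
  have hv : ∀ l, v l ∈ WeakDual.toStrongDual ⁻¹' closedBall 0 C := fun l =>
    mem_closedBall_zero_iff.2 (((toDual ℝ K).norm_map _).trans_le (hu l))
  obtain ⟨f, -, φ, hφ, hf⟩ := WeakDual.isSeqCompact_closedBall ℝ K 0 C hv
  refine ⟨(toDual ℝ K).symm (WeakDual.toStrongDual f), φ, hφ, fun y => ?_⟩
  have hfy : Tendsto (fun l => inner ℝ (⟨u (φ l), hmem _⟩ : K) (K.orthogonalProjectionOnto y))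
      atTop (𝓝 (f (K.orthogonalProjectionOnto y))) :=
    ((WeakDual.eval_continuous _).tendsto f).comp hf
  rw [← Submodule.inner_orthogonalProjectionOnto_eq_of_mem_left, toDual_symm_apply]
  simp only [Submodule.inner_orthogonalProjectionOnto_eq_of_mem_left] at hfy
  exact hfy

namespace SeqWeaklyContinuous

theorem continuous {α : Type*} [TopologicalSpace α] {J : H → α} (hJ : SeqWeaklyContinuous J) :
    Continuous J :=
  continuous_iff_seqContinuous.2 fun {_ _} hu => hJ _ _ (weakTendsto_of_tendsto hu)

variable [CompleteSpace H]

theorem isSeqCompact_image_closedBall {α : Type*} [TopologicalSpace α] {J : H → α}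
    (hJ : SeqWeaklyContinuous J) (r : ℝ) : IsSeqCompact (J '' closedBall 0 r) := by
  intro x hx
  choose u hu hux using hx
  have hur : ∀ l, ‖u l‖ ≤ r := fun l => mem_closedBall_zero_iff.1 (hu l)
  obtain ⟨g, φ, hφ, hg⟩ := exists_strictMono_weakTendsto u hur
  refine ⟨J g, ⟨g, mem_closedBall_zero_iff.2 ?_, rfl⟩, φ, hφ, ?_⟩
  · exact norm_le_of_weakTendsto hg tendsto_const_nhds fun l => hur (φ l)
  · obtain rfl : x = J ∘ u := funext fun l => (hux l).symm
    exact hJ _ _ hg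

variable {J : H → ℝ} (hJ : SeqWeaklyContinuous J)
include hJ

theorem bddBelow_image_closedBall (r : ℝ) : BddBelow (J '' closedBall 0 r) :=
  (hJ.isSeqCompact_image_closedBall r).isCompact.bddBelow

theorem exists_eq_sInf_image_closedBall {r : ℝ} (hr : 0 ≤ r) :
    ∃ g ∈ closedBall (0 : H) r, J g = sInf (J '' closedBall 0 r) :=
  (hJ.isSeqCompact_image_closedBall r).isCompact.sInf_mem ((nonempty_closedBall.2 hr).image J)

theorem antitoneOn_sInf_image_closedBall :
    AntitoneOn (fun r => sInf (J '' closedBall (0 : H) r)) (Set.Ici 0) := fun _ hr _ _ hrr' =>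
  csInf_le_csInf (hJ.bddBelow_image_closedBall _) ((nonempty_closedBall.2 hr).image J)
    (Set.image_mono (closedBall_subset_closedBall hrr'))

theorem sInf_image_closedBall_le {r : ℝ} {g : H} (hg : ‖g‖ ≤ r) :
    sInf (J '' closedBall 0 r) ≤ J g :=
  csInf_le (hJ.bddBelow_image_closedBall r) ⟨g, mem_closedBall_zero_iff.2 hg, rfl⟩

theorem exists_lt_sInf_image_closedBall {R a : ℝ} (hR : 0 ≤ R)
    (ha : a < sInf (J '' closedBall (0 : H) R)) : ∃ r > R, a < sInf (J '' closedBall (0 : H) r) := by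
  by_contra! h
  set r : ℕ → ℝ := fun l => R + 1 / (l + 1)
  have hr : Tendsto r atTop (𝓝 R) := by
    simpa [r] using tendsto_const_nhds.add (tendsto_one_div_add_atTop_nhds_zero_nat (𝕜 := ℝ))
  have hRr : ∀ l, R < r l := fun l => lt_add_of_pos_right R (by positivity)
  choose u hu hJu using fun l => hJ.exists_eq_sInf_image_closedBall (hR.trans (hRr l).le)
  have hur : ∀ l, ‖u l‖ ≤ r l := fun l => mem_closedBall_zero_iff.1 (hu l)
  have hur₁ : ∀ l, ‖u l‖ ≤ R + 1 := fun l =>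
    (hur l).trans (add_le_add_right (div_le_one_of_le₀ (by simp) (by positivity)) R)
  obtain ⟨g, φ, hφ, hg⟩ := exists_strictMono_weakTendsto u hur₁
  have hgR : ‖g‖ ≤ R := norm_le_of_weakTendsto hg (hr.comp hφ.tendsto_atTop) fun l => hur (φ l)
  have hJg : J g ≤ a :=
    le_of_tendsto' (hJ _ _ hg) fun l => (hJu (φ l)).trans_le (h _ (hRr (φ l)))
  exact (ha.trans_le (hJ.sInf_image_closedBall_le hgR)).not_ge hJg

theorem tendsto_sInf_image_closedBall_nhdsGT {R : ℝ} (hR : 0 ≤ R) :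
    Tendsto (fun r => sInf (J '' closedBall (0 : H) r)) (𝓝[>] R)
      (𝓝 (sInf (J '' closedBall (0 : H) R))) := by
  have hanti := hJ.antitoneOn_sInf_image_closedBall
  refine tendsto_order.2 ⟨fun a ha => ?_, fun a ha => ?_⟩
  · obtain ⟨r', hRr', har'⟩ := hJ.exists_lt_sInf_image_closedBall hR ha
    filter_upwards [Ioo_mem_nhdsGT hRr'] with r hr
    exact har'.trans_le (hanti (hR.trans hr.1.le) (hR.trans hRr'.le) hr.2.le)
  · filter_upwards [self_mem_nhdsWithin] with r hr
    exact (hanti hR (hR.trans (le_of_lt hr)) (le_of_lt hr)).trans_lt ha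

theorem tendsto_sInf_image_closedBall_nhdsLT {R : ℝ} (hR : 0 < R) :
    Tendsto (fun r => sInf (J '' closedBall (0 : H) r)) (𝓝[<] R)
      (𝓝 (sInf (J '' closedBall (0 : H) R))) := by
  have hanti := hJ.antitoneOn_sInf_image_closedBall
  obtain ⟨g, hg, hJg⟩ := hJ.exists_eq_sInf_image_closedBall hR.le
  have hscale : Tendsto (fun r => J ((r / R) • g)) (𝓝 R) (𝓝 (J g)) :=
    (hJ.continuous.comp ((continuous_id.div_const R).smul continuous_const)).tendsto' R _
      (by simp [hR.ne'])
  refine tendsto_order.2 ⟨fun a ha => ?_, fun a ha => ?_⟩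
  · filter_upwards [Ioo_mem_nhdsLT hR] with r hr
    exact ha.trans_le (hanti hr.1.le hR.le hr.2.le)
  · filter_upwards [(hscale.mono_left nhdsWithin_le_nhds).eventually_lt_const (hJg ▸ ha),
      Ioo_mem_nhdsLT hR] with r hJr hr
    have hrR : 0 ≤ r / R := div_nonneg hr.1.le hR.le
    refine (hJ.sInf_image_closedBall_le ?_).trans_lt hJr
    calc ‖(r / R) • g‖ = r / R * ‖g‖ := by rw [norm_smul, Real.norm_of_nonneg hrR]
      _ ≤ r / R * R := mul_le_mul_of_nonneg_left (mem_closedBall_zero_iff.1 hg) hrR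
      _ = r := div_mul_cancel₀ r hR.ne'

theorem continuousAt_sInf_image_closedBall {R : ℝ} (hR : 0 < R) :
    ContinuousAt (fun r => sInf (J '' closedBall (0 : H) r)) R :=
  continuousAt_iff_continuous_left'_right'.2
    ⟨hJ.tendsto_sInf_image_closedBall_nhdsLT hR, hJ.tendsto_sInf_image_closedBall_nhdsGT hR.le⟩

end SeqWeaklyContinuous

end InnerProductSpace

theorem inf_over_balls_continuous_in_radius_general
    {H : Type*} [NormedAddCommGroup H] [InnerProductSpace ℝ H] [CompleteSpace H]
    (J : H → ℝ)
    (hJw : ∀ (u : ℕ → H) (g : H),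
      (∀ y : H, Tendsto (fun l => (inner ℝ (u l) y : ℝ)) atTop (nhds ((inner ℝ g y : ℝ)))) →
      Tendsto (fun l => J (u l)) atTop (nhds (J g)))
    (R : ℝ) (hR : 0 < R) :
    Tendsto (fun ε : ℝ => sInf (J '' {g : H | ‖g‖ ≤ R + ε}))
        (nhdsWithin 0 (Set.Ioi 0)) (nhds (sInf (J '' {g : H | ‖g‖ ≤ R})))
    ∧ Tendsto (fun ε : ℝ => sInf (J '' {g : H | ‖g‖ ≤ R - ε}))
        (nhdsWithin 0 (Set.Ioi 0)) (nhds (sInf (J '' {g : H | ‖g‖ ≤ R}))) := by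
  have hJ : InnerProductSpace.SeqWeaklyContinuous J := hJw
  have hball : ∀ r, {g : H | ‖g‖ ≤ r} = closedBall 0 r := fun r => by
    ext; exact mem_closedBall_zero_iff.symm
  simp only [hball]
  have hcont := (hJ.continuousAt_sInf_image_closedBall hR).tendsto
  exact ⟨(hcont.comp ((continuous_const_add R).tendsto' 0 R (add_zero R))).mono_left
      nhdsWithin_le_nhds,
    (hcont.comp ((continuous_sub_left R).tendsto' 0 R (sub_zero R))).mono_left nhdsWithin_le_nhds⟩

/-- The infimum of a nonnegative sequentially weakly continuous functional on a real
Hilbert space over the closed ball of radius `R + s` depends continuously on `s` at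
`s = 0`, from the right and from the left. -/
theorem inf_over_balls_continuous_in_radius
    {H : Type*} [NormedAddCommGroup H] [InnerProductSpace ℝ H] [CompleteSpace H]
    (J : H → ℝ) (hJ0 : ∀ g, 0 ≤ J g)
    (hJw : ∀ (u : ℕ → H) (g : H),
      (∀ y : H, Tendsto (fun l => (inner ℝ (u l) y : ℝ)) atTop (nhds ((inner ℝ g y : ℝ)))) →
      Tendsto (fun l => J (u l)) atTop (nhds (J g)))
    (R : ℝ) (hR : 0 < R) :
    Tendsto (fun ε : ℝ => sInf (J '' {g : H | ‖g‖ ≤ R + ε}))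
        (nhdsWithin 0 (Set.Ioi 0)) (nhds (sInf (J '' {g : H | ‖g‖ ≤ R})))
    ∧ Tendsto (fun ε : ℝ => sInf (J '' {g : H | ‖g‖ ≤ R - ε}))
        (nhdsWithin 0 (Set.Ioi 0)) (nhds (sInf (J '' {g : H | ‖g‖ ≤ R}))) :=
  inf_over_balls_continuous_in_radius_general J hJw R hR
end
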